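/- arXiv:2204.12057 — 11 statements merged into one kernel-verified Lean document; each statement's English description precedes it below -/
import Mathlib

section
/- Fix integers m ≥ 2, n ≥ 1 and a real number D with 0 < D < n(m−1)/m. Then the differential privacy loss of the mechanism Q_D equals ε_DP(Q_D) = log((m−1)(n−D)/D). -/
open Finset Real

/-!
Write `Q_D(y|x) = C R^{-d(x,y)}` with `C = (1 - D/n)^n > 0` and `R = (m-1)(n-D)/D`; the
hypothesis `D < n(m-1)/m` is exactly `R > 1`. By the triangle inequality for the Hamming
distance, `Q(y|x) ≤ R^{d(x,x')} Q(y|x')`, so every `ε ≥ log R` is admissible for neighbours,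
and `y = x` shows that the factor `R` is attained. Hence the admissible `ε` form `[log R, ∞)`.
-/

section Hamming

variable {ι : Type*} [Fintype ι] [DecidableEq ι] {β : ι → Type*} [∀ i, DecidableEq (β i)]

theorem hammingDist_update_self {x : ∀ i, β i} {i : ι} {a : β i} (ha : a ≠ x i) :
    hammingDist x (Function.update x i a) = 1 := by
  rw [hammingDist, ← card_singleton i]
  congr 1
  ext j
  rcases eq_or_ne j i with rfl | hj
  · simp [ha.symm]
  · simp [hj]

theorem exists_hammingDist_eq_one [Nonempty ι] [∀ i, Nontrivial (β i)] :
    ∃ x x' : ∀ i, β i, hammingDist x x' = 1 := by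
  obtain ⟨i⟩ := ‹Nonempty ι›
  let x : ∀ i, β i := fun _ => Classical.arbitrary _
  obtain ⟨a, ha⟩ := exists_ne (x i)
  exact ⟨x, _, hammingDist_update_self ha⟩

omit [DecidableEq ι] in
theorem zpow_neg_hammingDist_le {R : ℝ} (hR : 1 ≤ R) (x x' y : ∀ i, β i) :
    R ^ (-(hammingDist x y : ℤ)) ≤ R ^ (hammingDist x x' : ℤ) * R ^ (-(hammingDist x' y : ℤ)) := by
  rw [← zpow_add₀ (by positivity)]
  refine zpow_le_zpow_right₀ hR ?_
  have := hammingDist_triangle x' x y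
  rw [hammingDist_comm x' x] at this
  omega

theorem setOf_dp_geometric_eq_Ici [Nonempty ι] [∀ i, Nontrivial (β i)] {C R : ℝ}
    (hC : 0 < C) (hR : 1 ≤ R) :
    {ε : ℝ | 0 ≤ ε ∧ ∀ x x' y : ∀ i, β i, hammingDist x x' = 1 →
      C * R ^ (-(hammingDist x y : ℤ)) ≤ exp ε * (C * R ^ (-(hammingDist x' y : ℤ)))} =
      Set.Ici (log R) := by
  have hR₀ : 0 < R := by positivity
  ext ε
  simp only [Set.mem_ofPred_eq, Set.mem_Ici, log_le_iff_le_exp hR₀]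
  constructor
  · rintro ⟨-, hε⟩
    obtain ⟨x, x', hxx'⟩ := exists_hammingDist_eq_one (β := β)
    have h := hε x x' x hxx'
    rw [hammingDist_self, hammingDist_comm, hxx'] at h
    simp only [CharP.cast_eq_zero, neg_zero, zpow_zero, mul_one, Nat.cast_one, zpow_neg_one] at h
    rw [← div_eq_mul_inv, mul_div_assoc', le_div_iff₀ hR₀, mul_comm] at h
    exact le_of_mul_le_mul_right h hC
  · intro hε
    refine ⟨(log_nonneg hR).trans ((log_le_iff_le_exp hR₀).2 hε), fun x x' y hxx' => ?_⟩
    calc C * R ^ (-(hammingDist x y : ℤ))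
        ≤ C * (R * R ^ (-(hammingDist x' y : ℤ))) := by
          gcongr
          simpa [hxx'] using zpow_neg_hammingDist_le hR x x' y
      _ ≤ C * (exp ε * R ^ (-(hammingDist x' y : ℤ))) := by gcongr
      _ = exp ε * (C * R ^ (-(hammingDist x' y : ℤ))) := by ring

end Hamming

theorem one_le_mul_sub_div {m n D : ℝ} (hm : 0 < m) (hD : 0 < D) (hDn : D ≤ n * (m - 1) / m) :
    1 ≤ (m - 1) * (n - D) / D := by
  rw [le_div_iff₀ hD]
  rw [le_div_iff₀ hm] at hDn
  linarith

/-- for `0 < D < n(m-1)/m`, the differential privacy loss of `Q_D`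
(the infimum of all `ε ≥ 0` such that `Q_D(y|x) ≤ e^ε Q_D(y|x')` for all `y` and all
neighboring `x, x'`) equals `log((m-1)(n-D)/D)`. -/
theorem stmt_1 (m n : ℕ) (hm : 2 ≤ m) (hn : 1 ≤ n)
    (D : ℝ) (hD0 : 0 < D) (hDn : D < (n : ℝ) * ((m : ℝ) - 1) / m)
    (QD : (Fin n → Fin m) → (Fin n → Fin m) → ℝ)
    (hQD : ∀ x y, QD x y =
      (1 - D / n) ^ n * (((m : ℝ) - 1) * ((n : ℝ) - D) / D) ^ (-(hammingDist x y : ℤ))) :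
    sInf {ε : ℝ | 0 ≤ ε ∧ ∀ x x' y : Fin n → Fin m,
        hammingDist x x' = 1 → QD x y ≤ Real.exp ε * QD x' y} =
      Real.log (((m : ℝ) - 1) * ((n : ℝ) - D) / D) := by
  have : Nonempty (Fin n) := ⟨⟨0, hn⟩⟩
  have : Nontrivial (Fin m) := Fin.nontrivial_iff_two_le.2 hm
  have hm₀ : (0 : ℝ) < m := by positivity
  have hD_lt_n : D < n := hDn.trans_le <| by
    rw [div_le_iff₀ hm₀]; nlinarith
  have hC : 0 < (1 - D / n : ℝ) ^ n := by
    have : D / n < 1 := (div_lt_one (by positivity)).2 hD_lt_n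
    exact pow_pos (by linarith) n
  simp only [hQD]
  rw [setOf_dp_geometric_eq_Ici hC (one_le_mul_sub_div hm₀ hD0 hDn.le), csInf_Ici]
end

section
/- Fix integers m ≥ 2, n ≥ 1, a real number α > 1 and a real number D with 0 < D < n(m−1)/m. Then the Rényi differential privacy loss of the mechanism Q_D equals ε_{α,DP}(Q_D) = (1/(α−1)) · log[ (D/(n(m−1))) · ( (m−2) + ((n−D)(m−1)/D)^α + ((n−D)(m−1)/D)^{1−α} ) ]. -/
open Finset Real

lemma aux_sum_one (m : ℕ) (hm : 1 ≤ m) (a : Fin m) (p q : ℝ) :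
    (∑ v : Fin m, if a = v then p else q) = p + ((m:ℝ) - 1) * q := by
  have h : ∀ v : Fin m, (if a = v then p else q) = q + (if a = v then p - q else 0) := by
    intro v; split <;> ring
  simp_rw [h, Finset.sum_add_distrib, Finset.sum_const, Finset.sum_ite_eq, Finset.mem_univ,
    if_true, Finset.card_univ, Fintype.card_fin, nsmul_eq_mul]
  have : (1:ℝ) ≤ m := by exact_mod_cast hm
  ring

lemma aux_sum_two (m : ℕ) (a b : Fin m) (hab : a ≠ b) (p q s : ℝ) :
    (∑ v : Fin m, if a = v then p else if b = v then q else s) = p + q + ((m:ℝ) - 2) * s := by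
  have h : ∀ v : Fin m, (if a = v then p else if b = v then q else s)
      = s + (if a = v then p - s else 0) + (if b = v then q - s else 0) := by
    intro v
    rcases eq_or_ne a v with rfl | ha
    · rw [if_pos rfl, if_pos rfl, if_neg (by simpa [eq_comm] using hab)]; ring
    · rw [if_neg ha, if_neg ha]
      rcases eq_or_ne b v with rfl | hb
      · rw [if_pos rfl, if_pos rfl]; ring
      · rw [if_neg hb, if_neg hb]; ring
  simp_rw [h, Finset.sum_add_distrib, Finset.sum_const, Finset.sum_ite_eq, Finset.mem_univ,
    if_true, Finset.card_univ, Fintype.card_fin, nsmul_eq_mul]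
  ring

lemma key_sum (m n : ℕ) (hm : 2 ≤ m) (hn : 1 ≤ n) (α D : ℝ)
    (hD0 : 0 < D) (hDN : D < (n:ℝ))
    (x x' : Fin n → Fin m) (h1 : hammingDist x x' = 1) :
    (∑ y : Fin n → Fin m,
      ((1 - D / n) ^ n * (((m : ℝ) - 1) * ((n : ℝ) - D) / D) ^ (-(hammingDist x y : ℤ))) ^ α *
      ((1 - D / n) ^ n * (((m : ℝ) - 1) * ((n : ℝ) - D) / D) ^ (-(hammingDist x' y : ℤ))) ^ (1 - α))
    = D / ((n : ℝ) * ((m : ℝ) - 1)) *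
        (((m : ℝ) - 2) + ((((n : ℝ) - D) * ((m : ℝ) - 1)) / D) ^ α +
          ((((n : ℝ) - D) * ((m : ℝ) - 1)) / D) ^ (1 - α)) := by
  have hN0 : (0:ℝ) < n := by exact_mod_cast hn
  have hM1 : (1:ℝ) < m := by exact_mod_cast (by omega : 1 < m)
  have hND : (0:ℝ) < (n:ℝ) - D := by linarith
  set r : ℝ := ((n:ℝ) - D) * ((m:ℝ) - 1) / D with hr_def
  have hr : 0 < r := div_pos (mul_pos hND (by linarith)) hD0
  have hflip : (((m : ℝ) - 1) * ((n : ℝ) - D) / D) = r := by rw [hr_def]; ring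
  set c : ℝ := (1 - D / (n:ℝ)) ^ n with hc_def
  have h1D : (0:ℝ) < 1 - D / n := by
    rw [sub_pos, div_lt_one hN0]; exact hDN
  have hc : 0 < c := by rw [hc_def]; positivity
  set L : ℝ := Real.log r with hL_def
  set e : Fin n → Fin m → ℝ := fun i v =>
    -(α * (if x i = v then 0 else 1) + (1 - α) * (if x' i = v then 0 else 1)) with he_def
  -- distance as a sum
  have hd : ∀ z y : Fin n → Fin m, (hammingDist z y : ℝ) = ∑ i, (if z i = y i then (0:ℝ) else 1) := by
    intro z y
    simp [hammingDist, Finset.card_filter, apply_ite (Nat.cast : ℕ → ℝ)]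
  -- each term
  have hterm : ∀ y : Fin n → Fin m,
      (c * (((m : ℝ) - 1) * ((n : ℝ) - D) / D) ^ (-(hammingDist x y : ℤ))) ^ α *
      (c * (((m : ℝ) - 1) * ((n : ℝ) - D) / D) ^ (-(hammingDist x' y : ℤ))) ^ (1 - α)
      = c * ∏ i, Real.exp (L * e i (y i)) := by
    intro y
    have hz : ∀ z : Fin n → Fin m, (((m : ℝ) - 1) * ((n : ℝ) - D) / D) ^ (-(hammingDist z y : ℤ))
        = r ^ (-(hammingDist z y : ℝ)) := by
      intro z
      rw [hflip, ← Real.rpow_intCast r (-(hammingDist z y : ℤ))]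
      push_cast
      ring_nf
    have hmr : ∀ (a b : ℝ), (c * r ^ a) ^ b = c ^ b * r ^ (a * b) := by
      intro a b
      rw [Real.mul_rpow hc.le (Real.rpow_nonneg hr.le _), ← Real.rpow_mul hr.le]
    rw [hz x, hz x', hmr, hmr, mul_mul_mul_comm, ← Real.rpow_add hc, ← Real.rpow_add hr]
    have h11 : α + (1 - α) = 1 := by ring
    rw [h11, Real.rpow_one]
    have hE : -(hammingDist x y : ℝ) * α + -(hammingDist x' y : ℝ) * (1 - α)
        = ∑ i, e i (y i) := by
      symm
      rw [hd x y, hd x' y, neg_mul, neg_mul, Finset.sum_mul, Finset.sum_mul, ← Finset.sum_neg_distrib,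
        ← Finset.sum_neg_distrib, ← Finset.sum_add_distrib]
      refine Finset.sum_congr rfl fun i _ => ?_
      simp only [he_def]
      ring
    rw [hE, Real.rpow_def_of_pos hr, ← hL_def, Finset.mul_sum, Real.exp_sum]
  rw [Finset.sum_congr rfl fun y _ => hterm y, ← Finset.mul_sum]
  rw [show (∑ y : Fin n → Fin m, ∏ i, Real.exp (L * e i (y i)))
      = ∏ i, ∑ v, Real.exp (L * e i v) by
    rw [Finset.prod_univ_sum, Fintype.piFinset_univ]]
  -- locate the differing coordinate
  simp only [hammingDist] at h1
  obtain ⟨i₀, hi₀⟩ := Finset.card_eq_one.mp h1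
  have hne : x i₀ ≠ x' i₀ := by
    have h := Finset.mem_singleton_self i₀
    rw [← hi₀, Finset.mem_filter] at h
    exact h.2
  have heq : ∀ i, i ≠ i₀ → x i = x' i := by
    intro i hi
    by_contra hcon
    have : i ∈ Finset.filter (fun i => x i ≠ x' i) Finset.univ :=
      Finset.mem_filter.mpr ⟨Finset.mem_univ _, hcon⟩
    rw [hi₀, Finset.mem_singleton] at this
    exact hi this
  -- factors away from i₀
  have hfac1 : ∀ i, i ≠ i₀ → (∑ v, Real.exp (L * e i v)) = 1 + ((m:ℝ) - 1) * r ^ (-1:ℝ) := by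
    intro i hi
    have hxe : x' i = x i := (heq i hi).symm
    have hv : ∀ v : Fin m, Real.exp (L * e i v) = if x i = v then (1:ℝ) else r ^ (-1:ℝ) := by
      intro v
      simp only [he_def, hxe]
      split
      · norm_num
      · rw [Real.rpow_def_of_pos hr, ← hL_def]
        congr 1
        ring
    rw [Finset.sum_congr rfl fun v _ => hv v, aux_sum_one m (by omega) (x i)]
  -- factor at i₀
  have hfac2 : (∑ v, Real.exp (L * e i₀ v))
      = r ^ (α - 1) + r ^ (-α) + ((m:ℝ) - 2) * r ^ (-1:ℝ) := by
    have hv : ∀ v : Fin m, Real.exp (L * e i₀ v)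
        = if x i₀ = v then r ^ (α - 1) else if x' i₀ = v then r ^ (-α) else r ^ (-1:ℝ) := by
      intro v
      simp only [he_def]
      rcases eq_or_ne (x i₀) v with rfl | h
      · rw [if_pos rfl, if_pos rfl, if_neg (Ne.symm hne)]
        rw [Real.rpow_def_of_pos hr, ← hL_def]
        congr 1
        ring
      · rw [if_neg h, if_neg h]
        rcases eq_or_ne (x' i₀) v with rfl | h2
        · rw [if_pos rfl, if_pos rfl]
          rw [Real.rpow_def_of_pos hr, ← hL_def]
          congr 1
          ring
        · rw [if_neg h2, if_neg h2]
          rw [Real.rpow_def_of_pos hr, ← hL_def]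
          congr 1
          ring
    rw [Finset.sum_congr rfl fun v _ => hv v, aux_sum_two m (x i₀) (x' i₀) hne]
  -- split off the i₀ factor
  have hprod : (∏ i, ∑ v, Real.exp (L * e i v))
      = (r ^ (α - 1) + r ^ (-α) + ((m:ℝ) - 2) * r ^ (-1:ℝ))
        * (1 + ((m:ℝ) - 1) * r ^ (-1:ℝ)) ^ (n - 1) := by
    rw [← Finset.mul_prod_erase Finset.univ _ (Finset.mem_univ i₀), hfac2]
    congr 1
    rw [Finset.prod_congr rfl (fun i hi => hfac1 i (Finset.ne_of_mem_erase hi)),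
      Finset.prod_const, Finset.card_erase_of_mem (Finset.mem_univ i₀),
      Finset.card_univ, Fintype.card_fin]
  rw [hprod]
  -- now pure algebra
  have hm1 : ((m:ℝ) - 1) ≠ 0 := by linarith
  have hrm1 : r ^ (-1:ℝ) = r⁻¹ := by
    rw [Real.rpow_neg hr.le, Real.rpow_one]
  have hA : r ^ (α - 1) = r ^ α * r⁻¹ := by
    rw [Real.rpow_sub hr, Real.rpow_one, div_eq_mul_inv]
  have hB : r ^ (-α) = r ^ (1 - α) * r⁻¹ := by
    rw [show -α = (1 - α) - 1 by ring, Real.rpow_sub hr, Real.rpow_one, div_eq_mul_inv]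
  have hBval : 1 + ((m:ℝ) - 1) * r⁻¹ = (n:ℝ) / ((n:ℝ) - D) := by
    rw [hr_def]
    field_simp
    ring
  have hcval : c = (((n:ℝ) - D) / (n:ℝ)) ^ n := by
    rw [hc_def]
    congr 1
    field_simp
  obtain ⟨k, rfl⟩ : ∃ k, n = k + 1 := ⟨n - 1, by omega⟩
  rw [hrm1, hA, hB, hBval, hcval, Nat.add_sub_cancel, pow_succ]
  have cancel : ((((k+1:ℕ):ℝ) - D) / ((k+1:ℕ):ℝ)) ^ k * (((k+1:ℕ):ℝ) / (((k+1:ℕ):ℝ) - D)) ^ k = 1 := by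
    rw [← mul_pow]
    rw [show (((k+1:ℕ):ℝ) - D) / ((k+1:ℕ):ℝ) * (((k+1:ℕ):ℝ) / (((k+1:ℕ):ℝ) - D)) = 1 by
      rw [div_mul_div_comm, mul_comm]
      exact div_self (mul_ne_zero hN0.ne' hND.ne')]
    exact one_pow k
  have hkey : ((((k+1:ℕ):ℝ) - D) / ((k+1:ℕ):ℝ)) * r⁻¹
      = D / (((k+1:ℕ):ℝ) * ((m:ℝ) - 1)) := by
    rw [hr_def, inv_div]
    rw [div_mul_div_comm, div_eq_div_iff (by positivity) (by
      exact mul_ne_zero hN0.ne' hm1)]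
    ring
  linear_combination ((((m:ℝ) - 2) + r ^ α + r ^ (1 - α))
      * ((((k+1:ℕ):ℝ) - D) / ((k+1:ℕ):ℝ)) * r⁻¹) * cancel
    + (((m:ℝ) - 2) + r ^ α + r ^ (1 - α)) * hkey

/-- for `α > 1` and `0 < D < n(m-1)/m`, the Rényi differential privacy loss
of `Q_D`, i.e. the maximum over neighboring pairs `x, x'` of
`(1/(α-1)) log Σ_y Q_D(y|x)^α Q_D(y|x')^{1-α}`, equals
`(1/(α-1)) log[(D/(n(m-1))) ((m-2) + ((n-D)(m-1)/D)^α + ((n-D)(m-1)/D)^{1-α})]`. -/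
theorem stmt_2 (m n : ℕ) (hm : 2 ≤ m) (hn : 1 ≤ n)
    (α : ℝ) (hα : 1 < α)
    (D : ℝ) (hD0 : 0 < D) (hDn : D < (n : ℝ) * ((m : ℝ) - 1) / m)
    (QD : (Fin n → Fin m) → (Fin n → Fin m) → ℝ)
    (hQD : ∀ x y, QD x y =
      (1 - D / n) ^ n * (((m : ℝ) - 1) * ((n : ℝ) - D) / D) ^ (-(hammingDist x y : ℤ))) :
    IsGreatest {v : ℝ | ∃ x x' : Fin n → Fin m, hammingDist x x' = 1 ∧
        v = 1 / (α - 1) * Real.log (∑ y, QD x y ^ α * QD x' y ^ (1 - α))}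
      (1 / (α - 1) * Real.log (D / ((n : ℝ) * ((m : ℝ) - 1)) *
        (((m : ℝ) - 2) + ((((n : ℝ) - D) * ((m : ℝ) - 1)) / D) ^ α +
          ((((n : ℝ) - D) * ((m : ℝ) - 1)) / D) ^ (1 - α)))) := by
  have hMpos : (0:ℝ) < m := by exact_mod_cast (by omega : 0 < m)
  have hNnn : (0:ℝ) ≤ n := Nat.cast_nonneg n
  have hDN : D < (n:ℝ) := lt_of_lt_of_le hDn (by rw [div_le_iff₀ hMpos]; nlinarith)
  constructor
  · -- membership
    set i₀ : Fin n := ⟨0, by omega⟩ with hi0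
    set a : Fin m := ⟨0, by omega⟩ with ha
    set b : Fin m := ⟨1, by omega⟩ with hb
    have hab : a ≠ b := by simp [ha, hb, Fin.ext_iff]
    set x : Fin n → Fin m := fun _ => a with hx
    set x' : Fin n → Fin m := Function.update x i₀ b with hx'
    have h1 : hammingDist x x' = 1 := by
      simp only [hammingDist]
      rw [Finset.card_eq_one]
      refine ⟨i₀, ?_⟩
      ext i
      simp only [Finset.mem_filter, Finset.mem_univ, true_and, Finset.mem_singleton,
        hx', Function.update_apply, hx]
      by_cases h : i = i₀ <;> simp [h, hab]
    refine ⟨x, x', h1, ?_⟩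
    simp only [hQD]
    rw [key_sum m n hm hn α D hD0 hDN x x' h1]
  · -- upper bound
    rintro v ⟨x, x', h1, rfl⟩
    simp only [hQD]
    rw [key_sum m n hm hn α D hD0 hDN x x' h1]
end

section
/- Fix integers m ≥ 2, n ≥ 1 and a real number D with 0 < D ≤ n(m−1)/m. Then the maximal leakage of the mechanism Q_D equals ε_ML(Q_D) = n · log( m(1 − D/n) ). -/
open Finset Real

/-! The condition `D ≤ n(m - 1)/m` says exactly that the ratio `r = (m - 1)(n - D)/D` is at least `1`,
so `Q_D(y|x) = (1 - D/n)^n r^{-d(x,y)}` is largest at `x = y`. Every output `y` therefore contributes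
`(1 - D/n)^n` to the maximal leakage sum, and the `m^n` outputs add up to `(m(1 - D/n))^n`. -/

theorem ciSup_eq_of_forall_le_apply {ι α : Type*} [ConditionallyCompleteLattice α] {f : ι → α}
    (i : ι) (h : ∀ j, f j ≤ f i) : ⨆ j, f j = f i :=
  have : Nonempty ι := ⟨i⟩
  (show IsGreatest (Set.range f) (f i) from
    ⟨⟨i, rfl⟩, by rintro _ ⟨j, rfl⟩; exact h j⟩).isLUB.ciSup_eq

theorem iSup_mul_zpow_neg_hammingDist {ι : Type*} [Fintype ι] {β : ι → Type*}
    [∀ i, DecidableEq (β i)] {c r : ℝ} (hc : 0 ≤ c) (hr : 1 ≤ r) (y : ∀ i, β i) :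
    ⨆ x, c * r ^ (-(hammingDist x y : ℤ)) = c := by
  have hdiag : c * r ^ (-(hammingDist y y : ℤ)) = c := by simp
  refine (ciSup_eq_of_forall_le_apply y fun x => ?_).trans hdiag
  rw [hdiag]
  exact mul_le_of_le_one_right hc (zpow_le_one_of_nonpos₀ hr (by simp))

section DistortionBound

variable {m n D : ℝ} (hm : 0 < m) (hDn : D ≤ n * (m - 1) / m)
include hm hDn

theorem one_le_sub_one_mul_sub_div (hD : 0 < D) : 1 ≤ (m - 1) * (n - D) / D := by
  rw [le_div_iff₀ hm] at hDn
  rw [le_div_iff₀ hD]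
  linarith

theorem one_sub_div_nonneg (hn : 0 ≤ n) : 0 ≤ 1 - D / n := by
  have hDm : D * m ≤ n * (m - 1) := (le_div_iff₀ hm).mp hDn
  have hD_le_n : D ≤ n := by nlinarith
  exact sub_nonneg.mpr (div_le_one_of_le₀ hD_le_n hn)

end DistortionBound

theorem stmt_3_general (m n : ℕ) (hm : 2 ≤ m)
    (D : ℝ) (hD0 : 0 < D) (hDn : D ≤ (n : ℝ) * ((m : ℝ) - 1) / m)
    (QD : (Fin n → Fin m) → (Fin n → Fin m) → ℝ)
    (hQD : ∀ x y, QD x y =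
      (1 - D / n) ^ n * (((m : ℝ) - 1) * ((n : ℝ) - D) / D) ^ (-(hammingDist x y : ℤ))) :
    Real.log (∑ y, ⨆ x, QD x y) = (n : ℝ) * Real.log ((m : ℝ) * (1 - D / n)) := by
  have hm0 : (0 : ℝ) < m := Nat.cast_pos.mpr (by omega)
  have hcolumn : ∀ y, ⨆ x, QD x y = (1 - D / n) ^ n := fun y => by
    simp_rw [hQD]
    exact iSup_mul_zpow_neg_hammingDist
      (pow_nonneg (one_sub_div_nonneg hm0 hDn n.cast_nonneg) n)
      (one_le_sub_one_mul_sub_div hm0 hDn hD0) y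
  simp_rw [hcolumn, sum_const, card_univ, Fintype.card_fun, Fintype.card_fin, nsmul_eq_mul]
  rw [Nat.cast_pow, ← mul_pow, Real.log_pow]

/-- for `0 < D ≤ n(m-1)/m`, the maximal leakage of `Q_D`,
`ε_ML(Q_D) = log Σ_y max_x Q_D(y|x)`, equals `n log(m(1 - D/n))`. -/
theorem stmt_3 (m n : ℕ) (hm : 2 ≤ m) (hn : 1 ≤ n)
    (D : ℝ) (hD0 : 0 < D) (hDn : D ≤ (n : ℝ) * ((m : ℝ) - 1) / m)
    (QD : (Fin n → Fin m) → (Fin n → Fin m) → ℝ)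
    (hQD : ∀ x y, QD x y =
      (1 - D / n) ^ n * (((m : ℝ) - 1) * ((n : ℝ) - D) / D) ^ (-(hammingDist x y : ℤ))) :
    Real.log (∑ y, ⨆ x, QD x y) = (n : ℝ) * Real.log ((m : ℝ) * (1 - D / n)) :=
  stmt_3_general m n hm D hD0 hDn QD hQD
end

section
/- Fix integers m ≥ 2, n ≥ 1 and a real number D with 0 < D < n, and let P_U be the uniform distribution on 𝒳 (P_U(x) = m^{−n} for all x). Then the mutual information of the mechanism Q_D under the uniform prior equals I(P_U, Q_D) = n·log( m(1 − D/n) ) + D·log( D/((m−1)(n−D)) ). -/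
open Finset Real

/-- for `0 < D < n`, the mutual information of `Q_D` under the uniform prior
`P_U(x) = m^{-n}` equals `n log(m(1 - D/n)) + D log(D/((m-1)(n-D)))`. -/
theorem stmt_4 (m n : ℕ) (hm : 2 ≤ m) (hn : 1 ≤ n)
    (D : ℝ) (hD0 : 0 < D) (hDn : D < n)
    (QD : (Fin n → Fin m) → (Fin n → Fin m) → ℝ)
    (hQD : ∀ x y, QD x y =
      (1 - D / n) ^ n * (((m : ℝ) - 1) * ((n : ℝ) - D) / D) ^ (-(hammingDist x y : ℤ))) :
    (∑ x : Fin n → Fin m, ∑ y : Fin n → Fin m,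
        ((m : ℝ) ^ n)⁻¹ * QD x y *
          Real.log (QD x y / ∑ x' : Fin n → Fin m, ((m : ℝ) ^ n)⁻¹ * QD x' y)) =
      (n : ℝ) * Real.log ((m : ℝ) * (1 - D / n)) +
        D * Real.log (D / (((m : ℝ) - 1) * ((n : ℝ) - D))) := by
  have hn0 : (0:ℝ) < n := by exact_mod_cast Nat.pos_of_ne_zero (by omega)
  have hm0 : (0:ℝ) < m := by exact_mod_cast Nat.pos_of_ne_zero (by omega)
  have hm1 : (0:ℝ) < (m:ℝ) - 1 := by
    have : (2:ℝ) ≤ m := by exact_mod_cast hm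
    linarith
  have hnD : (0:ℝ) < (n:ℝ) - D := by linarith
  set p : ℝ := 1 - D / n with hp_def
  have hp : 0 < p := by
    have : D / n < 1 := (div_lt_one hn0).2 hDn
    simpa [hp_def] using this
  set c : ℝ := ((m : ℝ) - 1) * ((n : ℝ) - D) / D with hc_def
  have hc : 0 < c := by positivity
  set r : ℝ := p / c with hr_def
  have hr : 0 < r := by positivity
  -- product formula
  have hprod : ∀ x y : Fin n → Fin m,
      QD x y = ∏ i : Fin n, (if x i = y i then p else r) := by
    intro x y
    rw [hQD, Finset.prod_ite]
    rw [Finset.prod_const, Finset.prod_const]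
    have hcard : (Finset.univ.filter fun i => x i = y i).card
        + (Finset.univ.filter fun i => ¬ x i = y i).card = n := by
      simpa using Finset.card_filter_add_card_filter_not
        (s := (Finset.univ : Finset (Fin n))) (p := fun i => x i = y i)
    have hd : hammingDist x y = (Finset.univ.filter fun i => ¬ x i = y i).card := rfl
    set a := (Finset.univ.filter fun i => x i = y i).card
    set b := (Finset.univ.filter fun i => ¬ x i = y i).card
    rw [hd, hr_def, div_pow, zpow_neg, zpow_natCast]
    rw [← hcard, pow_add]
    field_simp
  -- one-coordinate sums
  have hone : ∀ a : Fin m, (∑ b : Fin m, if a = b then p else r) = 1 := by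
    intro a
    have h1 : (∑ b : Fin m, if a = b then p else r)
        = (∑ b : Fin m, ((if a = b then p - r else 0) + r)) := by
      apply Finset.sum_congr rfl
      intro b _
      by_cases h : a = b <;> simp [h]
    rw [h1, Finset.sum_add_distrib, Finset.sum_ite_eq, Finset.sum_const]
    simp only [Finset.mem_univ, if_true, Finset.card_univ, Fintype.card_fin, nsmul_eq_mul]
    have : p + ((m:ℝ) - 1) * r = 1 := by
      rw [hr_def, hc_def, hp_def]
      field_simp
      ring
    linarith [this]
  have honez : ∀ a : Fin m, (∑ b : Fin m, if a = b then (0:ℝ) else r) = ((m:ℝ) - 1) * r := by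
    intro a
    have h1 : (∑ b : Fin m, if a = b then (0:ℝ) else r)
        = (∑ b : Fin m, ((if a = b then -r else 0) + r)) := by
      apply Finset.sum_congr rfl
      intro b _
      by_cases h : a = b <;> simp [h]
    rw [h1, Finset.sum_add_distrib, Finset.sum_ite_eq, Finset.sum_const]
    simp only [Finset.mem_univ, if_true, Finset.card_univ, Fintype.card_fin, nsmul_eq_mul]
    ring
  -- total mass 1
  have hsum1 : ∀ x : Fin n → Fin m, ∑ y : Fin n → Fin m, QD x y = 1 := by
    intro x
    simp_rw [hprod]
    rw [← Fintype.prod_sum (f := fun i b => if x i = b then p else r)]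
    rw [Finset.prod_congr rfl fun i _ => hone (x i)]
    simp
  -- expected distance D
  have hE : ∀ x : Fin n → Fin m,
      ∑ y : Fin n → Fin m, QD x y * (hammingDist x y : ℝ) = D := by
    intro x
    have hdist : ∀ y : Fin n → Fin m,
        (hammingDist x y : ℝ) = ∑ i : Fin n, (if x i = y i then (0:ℝ) else 1) := by
      intro y
      have h0 : (hammingDist x y : ℕ) = (Finset.univ.filter fun i => ¬ x i = y i).card := rfl
      rw [h0]
      rw [Finset.card_filter]
      push_cast
      apply Finset.sum_congr rfl
      intro i _
      by_cases h : x i = y i <;> simp [h]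
    calc ∑ y : Fin n → Fin m, QD x y * (hammingDist x y : ℝ)
        = ∑ y : Fin n → Fin m, ∑ i : Fin n,
            (∏ j : Fin n, (if x j = y j then p else r)) * (if x i = y i then (0:ℝ) else 1) := by
          apply Finset.sum_congr rfl
          intro y _
          rw [hprod, hdist, Finset.mul_sum]
      _ = ∑ i : Fin n, ∑ y : Fin n → Fin m,
            ∏ j : Fin n, (if j = i then (if x j = y j then (0:ℝ) else r)
              else (if x j = y j then p else r)) := by
          rw [Finset.sum_comm]
          apply Finset.sum_congr rfl
          intro i _
          apply Finset.sum_congr rfl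
          intro y _
          rw [← Finset.mul_prod_erase Finset.univ _ (Finset.mem_univ i),
              ← Finset.mul_prod_erase Finset.univ
                (fun j => (if j = i then (if x j = y j then (0:ℝ) else r)
                  else (if x j = y j then p else r))) (Finset.mem_univ i)]
          have herase : (∏ j ∈ Finset.univ.erase i, (if x j = y j then p else r))
              = ∏ j ∈ Finset.univ.erase i,
                (if j = i then (if x j = y j then (0:ℝ) else r)
                  else (if x j = y j then p else r)) := by
            apply Finset.prod_congr rfl
            intro j hj
            rw [if_neg (Finset.ne_of_mem_erase hj)]
          rw [← herase]
          simp only [if_pos rfl]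
          by_cases h : x i = y i <;> simp [h]
      _ = ∑ i : Fin n, ((m:ℝ) - 1) * r := by
          apply Finset.sum_congr rfl
          intro i _
          rw [← Fintype.prod_sum (f := fun j b => if j = i then (if x j = b then (0:ℝ) else r)
            else (if x j = b then p else r))]
          have hfac : ∀ j : Fin n, (∑ b : Fin m, if j = i then (if x j = b then (0:ℝ) else r)
              else (if x j = b then p else r)) = if j = i then ((m:ℝ) - 1) * r else 1 := by
            intro j
            by_cases h : j = i
            · simp only [if_pos h]
              exact honez (x j)
            · simp only [if_neg h]
              exact hone (x j)
          rw [Finset.prod_congr rfl fun j _ => hfac j, Finset.prod_ite_eq']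
          simp
      _ = D := by
          rw [Finset.sum_const, Finset.card_univ, Fintype.card_fin, nsmul_eq_mul]
          rw [hr_def, hc_def, hp_def]
          field_simp
  -- column sums
  have hsumx : ∀ y : Fin n → Fin m, ∑ x' : Fin n → Fin m, QD x' y = 1 := by
    intro y
    have hswap : ∀ x' : Fin n → Fin m, QD x' y = QD y x' := by
      intro x'
      rw [hQD, hQD, hammingDist_comm]
    rw [Finset.sum_congr rfl fun x' _ => hswap x']
    exact hsum1 y
  have hQpos : ∀ x y : Fin n → Fin m, 0 < QD x y := by
    intro x y
    rw [hQD]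
    positivity
  have hmn : (0:ℝ) < (m:ℝ) ^ n := by positivity
  -- simplify the log of each summand
  have hlog : ∀ x y : Fin n → Fin m,
      Real.log (QD x y / ∑ x' : Fin n → Fin m, ((m : ℝ) ^ n)⁻¹ * QD x' y)
      = (n:ℝ) * Real.log p - (hammingDist x y : ℝ) * Real.log c + (n:ℝ) * Real.log m := by
    intro x y
    have hden : (∑ x' : Fin n → Fin m, ((m : ℝ) ^ n)⁻¹ * QD x' y) = ((m : ℝ) ^ n)⁻¹ := by
      rw [← Finset.mul_sum, hsumx y]
      ring
    rw [hden, div_eq_mul_inv, inv_inv]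
    rw [Real.log_mul (ne_of_gt (hQpos x y)) (ne_of_gt hmn)]
    rw [hQD x y]
    rw [Real.log_mul (by positivity) (by positivity)]
    rw [Real.log_pow, Real.log_zpow, Real.log_pow]
    push_cast
    ring
  -- main computation
  calc (∑ x : Fin n → Fin m, ∑ y : Fin n → Fin m,
        ((m : ℝ) ^ n)⁻¹ * QD x y *
          Real.log (QD x y / ∑ x' : Fin n → Fin m, ((m : ℝ) ^ n)⁻¹ * QD x' y))
      = ∑ x : Fin n → Fin m, ((m : ℝ) ^ n)⁻¹ *
          ((n:ℝ) * Real.log p + (n:ℝ) * Real.log m - D * Real.log c) := by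
        apply Finset.sum_congr rfl
        intro x _
        have hrow : ∑ y : Fin n → Fin m,
            ((m : ℝ) ^ n)⁻¹ * QD x y *
              Real.log (QD x y / ∑ x' : Fin n → Fin m, ((m : ℝ) ^ n)⁻¹ * QD x' y)
            = ((m : ℝ) ^ n)⁻¹ * (((n:ℝ) * Real.log p + (n:ℝ) * Real.log m) *
                (∑ y : Fin n → Fin m, QD x y)
              - Real.log c * (∑ y : Fin n → Fin m, QD x y * (hammingDist x y : ℝ))) := by
          rw [Finset.mul_sum, Finset.mul_sum, ← Finset.sum_sub_distrib, Finset.mul_sum]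
          apply Finset.sum_congr rfl
          intro y _
          rw [hlog x y]
          ring
        rw [hrow, hsum1 x, hE x]
        ring
      _ = (n : ℝ) * Real.log ((m : ℝ) * (1 - D / n)) +
        D * Real.log (D / (((m : ℝ) - 1) * ((n : ℝ) - D))) := by
        rw [Finset.sum_const, Finset.card_univ]
        have hcardX : (Fintype.card (Fin n → Fin m) : ℝ) = (m:ℝ) ^ n := by
          simp [Fintype.card_fun]
        rw [nsmul_eq_mul, hcardX]
        rw [Real.log_mul (ne_of_gt hm0) (ne_of_gt hp)]
        have hlogc : Real.log (D / (((m : ℝ) - 1) * ((n : ℝ) - D))) = - Real.log c := by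
          rw [hc_def, ← Real.log_inv]
          congr 1
          field_simp
        rw [hlogc, ← mul_assoc, mul_inv_cancel₀ (ne_of_gt hmn), one_mul]
        ring
end

section
/- Fix integers m ≥ 2, n ≥ 1 and real numbers α > 1 and A > 0. For every probability distribution P on 𝒳, Σ_{y∈𝒳} ( Σ_{x∈𝒳} P(x) · A^{−α·d(x,y)} )^{1/α} ≤ m^{n(α−1)/α} · (1 + (m−1)·A^{−α})^{n/α}, with equality when P is the uniform distribution on 𝒳. In other words, the uniform distribution maximizes P ↦ Σ_y (Σ_x P(x) A^{−α d(x,y)})^{1/α} over all probability distributions on 𝒳. -/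
open Finset Real

lemma sum_pow_hamming (m n : ℕ) (c : ℝ) (y : Fin n → Fin m) [NeZero m] :
    ∑ x : Fin n → Fin m, c ^ hammingDist x y = (1 + ((m : ℝ) - 1) * c) ^ n := by
  have h1 : ∀ x : Fin n → Fin m, (c : ℝ) ^ hammingDist x y
      = ∏ i, (if x i = y i then 1 else c) := by
    intro x
    rw [hammingDist, Finset.prod_ite, Finset.prod_const_one, Finset.prod_const, one_mul]
  calc ∑ x : Fin n → Fin m, c ^ hammingDist x y
      = ∑ x : Fin n → Fin m, ∏ i, (if x i = y i then 1 else c) :=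
        Finset.sum_congr rfl fun x _ => h1 x
    _ = ∏ i : Fin n, ∑ b : Fin m, (if b = y i then 1 else c) :=
        (Fintype.prod_sum (fun i b => if b = y i then 1 else c)).symm
    _ = (1 + ((m : ℝ) - 1) * c) ^ n := by
        have h2 : ∀ i : Fin n, ∑ b : Fin m, (if b = y i then (1:ℝ) else c)
            = 1 + ((m : ℝ) - 1) * c := by
          intro i
          rw [Finset.sum_ite, Finset.sum_const, Finset.sum_const]
          have hc1 : (Finset.univ.filter (fun b : Fin m => b = y i)).card = 1 := by
            simp [Finset.filter_eq']
          have hc2 : (Finset.univ.filter (fun b : Fin m => ¬ b = y i)).card = m - 1 := by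
            simp [Finset.filter_ne']
          rw [hc1, hc2, one_smul, nsmul_eq_mul, Nat.cast_sub (NeZero.one_le (n := m)),
            Nat.cast_one]
        rw [Finset.prod_congr rfl fun i _ => h2 i, Finset.prod_const, Finset.card_univ,
          Fintype.card_fin]

/-- for `α > 1` and `A > 0`, every probability distribution `P` on
`𝒳 = Fin n → Fin m` satisfies
`Σ_y (Σ_x P(x) A^{-α d(x,y)})^{1/α} ≤ m^{n(α-1)/α} (1 + (m-1) A^{-α})^{n/α}`,
with equality for the uniform distribution: the uniform distribution maximizes
`P ↦ Σ_y (Σ_x P(x) A^{-α d(x,y)})^{1/α}`. -/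
theorem stmt_5 (m n : ℕ) (hm : 2 ≤ m) (hn : 1 ≤ n)
    (α A : ℝ) (hα : 1 < α) (hA : 0 < A) :
    (∀ P : (Fin n → Fin m) → ℝ, (∀ x, 0 ≤ P x) → (∑ x, P x = 1) →
      ∑ y : Fin n → Fin m,
          (∑ x : Fin n → Fin m, P x * A ^ (-(α * (hammingDist x y : ℝ)))) ^ (1 / α)
        ≤ (m : ℝ) ^ (((n : ℝ) * (α - 1)) / α) *
            (1 + ((m : ℝ) - 1) * A ^ (-α)) ^ ((n : ℝ) / α)) ∧
    (∑ y : Fin n → Fin m,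
        (∑ x : Fin n → Fin m, ((m : ℝ) ^ n)⁻¹ * A ^ (-(α * (hammingDist x y : ℝ)))) ^ (1 / α)
      = (m : ℝ) ^ (((n : ℝ) * (α - 1)) / α) *
          (1 + ((m : ℝ) - 1) * A ^ (-α)) ^ ((n : ℝ) / α)) := by
  have : NeZero m := ⟨by omega⟩
  set c : ℝ := A ^ (-α) with hc
  have hc0 : 0 < c := Real.rpow_pos_of_pos hA _
  have hα0 : (0:ℝ) < α := by linarith
  have hαne : α ≠ 0 := ne_of_gt hα0
  have hrw : ∀ x y : Fin n → Fin m,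
      A ^ (-(α * (hammingDist x y : ℝ))) = c ^ hammingDist x y := by
    intro x y
    rw [hc, ← Real.rpow_natCast (A ^ (-α)) (hammingDist x y), ← Real.rpow_mul hA.le]
    ring_nf
  set B : ℝ := 1 + ((m : ℝ) - 1) * c with hB
  have hB0 : 0 < B := by
    have : (1:ℝ) ≤ (m:ℝ) := by exact_mod_cast Nat.one_le_of_lt hm
    nlinarith
  have hm0 : (0:ℝ) < (m:ℝ) := by positivity
  have hM0 : (0:ℝ) < (m:ℝ) ^ n := by positivity
  have hRHS : (m : ℝ) ^ (((n : ℝ) * (α - 1)) / α) * B ^ ((n : ℝ) / α)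
      = (m : ℝ) ^ n * ((((m : ℝ) ^ n)⁻¹ * B ^ n) ^ (1 / α)) := by
    rw [Real.mul_rpow (by positivity) (by positivity),
      Real.inv_rpow hM0.le, ← Real.rpow_neg hM0.le,
      ← Real.rpow_natCast B n, ← Real.rpow_mul hB0.le, ← mul_assoc]
    nth_rewrite 1 [← Real.rpow_one ((m:ℝ) ^ n)]
    rw [← Real.rpow_add hM0, ← Real.rpow_natCast (m:ℝ) n, ← Real.rpow_mul hm0.le]
    congr 1
    · congr 1
      rw [mul_div_assoc]
      congr 1
      field_simp
      ring
    · congr 1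
      rw [mul_one_div]
  constructor
  · intro P hP0 hP1
    simp only [hrw]
    set a : (Fin n → Fin m) → ℝ := fun y => ∑ x : Fin n → Fin m, P x * c ^ hammingDist x y
      with ha
    have ha0 : ∀ y, 0 ≤ a y := by
      intro y; apply Finset.sum_nonneg; intro x _
      exact mul_nonneg (hP0 x) (le_of_lt (pow_pos hc0 _))
    have hsum : ∑ y : Fin n → Fin m, a y = B ^ n := by
      rw [ha, Finset.sum_comm]
      calc ∑ x : Fin n → Fin m, ∑ y : Fin n → Fin m, P x * c ^ hammingDist x y
          = ∑ x : Fin n → Fin m, P x * B ^ n := by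
            apply Finset.sum_congr rfl
            intro x _
            rw [← Finset.mul_sum]
            congr 1
            calc ∑ y : Fin n → Fin m, c ^ hammingDist x y
                = ∑ y : Fin n → Fin m, c ^ hammingDist y x :=
                  Finset.sum_congr rfl fun y _ => by rw [hammingDist_comm]
              _ = B ^ n := sum_pow_hamming m n c x
        _ = B ^ n := by rw [← Finset.sum_mul, hP1, one_mul]
    set M : ℝ := (m:ℝ) ^ n with hMdef
    have hcard : (Fintype.card (Fin n → Fin m) : ℝ) = M := by
      simp [hMdef]
    have hzα : ∀ y, ((a y) ^ (1 / α)) ^ α = a y := by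
      intro y
      rw [← Real.rpow_mul (ha0 y), one_div, inv_mul_cancel₀ hαne, Real.rpow_one]
    have jensen : (∑ y : Fin n → Fin m, M⁻¹ * (a y) ^ (1 / α)) ^ α ≤ M⁻¹ * B ^ n := by
      calc (∑ y : Fin n → Fin m, M⁻¹ * (a y) ^ (1 / α)) ^ α
          ≤ ∑ y : Fin n → Fin m, M⁻¹ * ((a y) ^ (1 / α)) ^ α :=
            Real.rpow_arith_mean_le_arith_mean_rpow Finset.univ _ _
              (fun i _ => inv_nonneg.mpr hM0.le)
              (by rw [Finset.sum_const, Finset.card_univ, nsmul_eq_mul, hcard]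
                  exact mul_inv_cancel₀ hM0.ne')
              (fun y _ => Real.rpow_nonneg (ha0 y) _) hα.le
        _ = M⁻¹ * ∑ y : Fin n → Fin m, a y := by
            rw [← Finset.mul_sum]
            exact congrArg _ (Finset.sum_congr rfl fun y _ => by rw [hzα y])
        _ = M⁻¹ * B ^ n := by rw [hsum]
    have hsnn : (0:ℝ) ≤ ∑ y : Fin n → Fin m, M⁻¹ * (a y) ^ (1 / α) := by
      apply Finset.sum_nonneg
      intro y _
      exact mul_nonneg (inv_nonneg.mpr hM0.le) (Real.rpow_nonneg (ha0 y) _)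
    have hstep : ∑ y : Fin n → Fin m, M⁻¹ * (a y) ^ (1 / α) ≤ (M⁻¹ * B ^ n) ^ (1 / α) := by
      have h := Real.rpow_le_rpow (Real.rpow_nonneg hsnn _) jensen
        (le_of_lt (by positivity : (0:ℝ) < 1 / α))
      rwa [← Real.rpow_mul hsnn, mul_one_div, div_self hαne, Real.rpow_one] at h
    have hfin : ∑ y : Fin n → Fin m, (a y) ^ (1 / α)
        = M * ∑ y : Fin n → Fin m, M⁻¹ * (a y) ^ (1 / α) := by
      rw [← Finset.mul_sum, ← mul_assoc, mul_inv_cancel₀ hM0.ne', one_mul]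
    show ∑ y : Fin n → Fin m, (a y) ^ (1 / α) ≤ _
    calc ∑ y : Fin n → Fin m, (a y) ^ (1 / α)
        = M * ∑ y : Fin n → Fin m, M⁻¹ * (a y) ^ (1 / α) := hfin
      _ ≤ M * (M⁻¹ * B ^ n) ^ (1 / α) := mul_le_mul_of_nonneg_left hstep hM0.le
      _ = _ := by rw [hRHS]
  · simp only [hrw]
    calc ∑ y : Fin n → Fin m,
          (∑ x : Fin n → Fin m, ((m : ℝ) ^ n)⁻¹ * c ^ hammingDist x y) ^ (1 / α)
        = ∑ y : Fin n → Fin m, ((((m : ℝ) ^ n)⁻¹) * B ^ n) ^ (1 / α) := by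
          apply Finset.sum_congr rfl; intro y _
          rw [← Finset.mul_sum, sum_pow_hamming]
      _ = (m : ℝ) ^ n * ((((m : ℝ) ^ n)⁻¹ * B ^ n) ^ (1 / α)) := by
          rw [Finset.sum_const, Finset.card_univ, nsmul_eq_mul]
          simp
      _ = _ := hRHS.symm
end

section
/- Fix integers m ≥ 2, n ≥ 1, a real number D > 0, a probability distribution P with full support on 𝒳, and set θ = m^n · min_{x∈𝒳} P(x). Then every (P,D)-valid mechanism Q satisfies e^{ε_ML(Q)} ≥ m·(1 − D/(θn)), i.e., Σ_{y∈𝒳} max_{x∈𝒳} Q(y|x) ≥ m(1 − D/(θn)). -/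
open Finset Real

lemma fiber_card_aux (m n : ℕ) (i : Fin n) (b : Fin m) :
    ({x : Fin n → Fin m | x i = b} : Finset _).card = m ^ (n - 1) := by
  classical
  rw [← Fintype.card_subtype]
  have e : {x : Fin n → Fin m // x i = b} ≃ ({j : Fin n // j ≠ i} → Fin m) :=
    { toFun := fun x j => x.1 j.1
      invFun := fun g => ⟨fun j => if h : j = i then b else g ⟨j, h⟩, by simp⟩
      left_inv := by
        rintro ⟨x, hx⟩
        apply Subtype.ext
        funext j
        by_cases h : j = i
        · subst h; simp [hx]
        · simp [h]
      right_inv := by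
        intro g
        funext j
        simp [j.2] }
  rw [Fintype.card_congr e, Fintype.card_fun, Fintype.card_fin]
  congr 1
  have h1 : Fintype.card {j : Fin n // j ≠ i} = n - Fintype.card {j : Fin n // j = i} := by
    simp [Ne, Fintype.card_subtype_compl]
  rw [h1, Fintype.card_subtype_eq]

/-- let `P` be a full-support distribution on `𝒳 = Fin n → Fin m` and
`θ = m^n · min_x P(x)`. Every `(P,D)`-valid mechanism `Q` satisfies
`e^{ε_ML(Q)} = Σ_y max_x Q(y|x) ≥ m(1 - D/(θn))`. -/
theorem stmt_8 (m n : ℕ) (hm : 2 ≤ m) (hn : 1 ≤ n)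
    (D : ℝ) (hD : 0 < D)
    (P : (Fin n → Fin m) → ℝ) (hPpos : ∀ x, 0 < P x) (hPsum : ∑ x, P x = 1)
    (θ : ℝ) (hθ : θ = (m : ℝ) ^ n * (⨅ x, P x))
    (Q : (Fin n → Fin m) → (Fin n → Fin m) → ℝ)
    (hQ0 : ∀ x y, 0 ≤ Q x y) (hQ1 : ∀ x, ∑ y, Q x y = 1)
    (hvalid : ∑ x, ∑ y, P x * Q x y * (hammingDist x y : ℝ) ≤ D) :
    (∑ y : Fin n → Fin m, ⨆ x, Q x y) ≥ (m : ℝ) * (1 - D / (θ * n)) := by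
  classical
  have hm0 : 0 < m := by omega
  have hmR : (0:ℝ) < m := by exact_mod_cast hm0
  have hnR : (0:ℝ) < n := by exact_mod_cast hn
  have hneX : Nonempty (Fin n → Fin m) := ⟨fun _ => ⟨0, hm0⟩⟩
  -- the min of P
  set c := ⨅ x, P x with hcdef
  have hc_le : ∀ x, c ≤ P x := fun x => ciInf_le (Set.finite_range P).bddBelow x
  have hc_pos : 0 < c := by
    obtain ⟨x0, hx0⟩ := Finite.exists_min P
    exact lt_of_lt_of_le (hPpos x0) (le_ciInf hx0)
  -- per-coordinate error
  set E : Fin n → ℝ := fun i => ∑ x, ∑ y, P x * Q x y * (if x i = y i then 0 else 1)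
    with hEdef
  have hE0 : ∀ i, 0 ≤ E i := by
    intro i
    refine sum_nonneg fun x _ => sum_nonneg fun y _ => ?_
    have := (hPpos x).le
    have := hQ0 x y
    split <;> nlinarith
  have hED : ∑ i, E i ≤ D := by
    refine le_trans (le_of_eq ?_) hvalid
    rw [Finset.sum_comm]
    refine Finset.sum_congr rfl fun x _ => ?_
    rw [Finset.sum_comm]
    refine Finset.sum_congr rfl fun y _ => ?_
    rw [← Finset.mul_sum]
    congr 1
    have : (hammingDist x y : ℝ) = ∑ i, if x i = y i then (0:ℝ) else 1 := by
      rw [hammingDist, Finset.card_filter]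
      push_cast
      refine Finset.sum_congr rfl fun i _ => ?_
      by_cases h : x i = y i <;> simp [h]
    rw [this]
  -- best coordinate
  obtain ⟨i, -, hi⟩ := Finset.exists_min_image Finset.univ E ⟨⟨0, by omega⟩, mem_univ _⟩
  have hEiD : (n : ℝ) * E i ≤ D := by
    have h1 : Finset.univ.card • E i ≤ ∑ j, E j :=
      Finset.card_nsmul_le_sum _ _ _ (fun j _ => hi j (mem_univ j))
    rw [Finset.card_univ, Fintype.card_fin, nsmul_eq_mul] at h1
    linarith
  -- per-symbol error and minimizers
  set r : Fin m → (Fin n → Fin m) → ℝ :=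
    fun b x => ∑ y, Q x y * (if y i = b then 0 else 1) with hrdef
  have hr0 : ∀ b x, 0 ≤ r b x := by
    intro b x
    refine sum_nonneg fun y _ => ?_
    have := hQ0 x y
    split <;> nlinarith
  have hmin : ∀ b : Fin m, ∃ xb, xb i = b ∧ ∀ x, x i = b → r b xb ≤ r b x := by
    intro b
    obtain ⟨xb, hxb, hminb⟩ := Finset.exists_min_image
      ({x : Fin n → Fin m | x i = b} : Finset _) (r b) ⟨fun _ => b, by simp⟩
    refine ⟨xb, by simpa using (mem_filter.mp hxb).2, fun x hx => hminb x (by simp [hx])⟩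
  choose xb hxbi hxbmin using hmin
  -- fiberwise decomposition of E i
  have hfib : ∀ b : Fin m,
      (c * m ^ (n-1)) * r b (xb b) ≤ ∑ x ∈ ({x : Fin n → Fin m | x i = b} : Finset _), P x * r b x := by
    intro b
    have h1 : ∀ x ∈ ({x : Fin n → Fin m | x i = b} : Finset _),
        c * r b (xb b) ≤ P x * r b x := by
      intro x hx
      have hx' : x i = b := by simpa using (mem_filter.mp hx).2
      exact mul_le_mul (hc_le x) (hxbmin b x hx') (hr0 b (xb b)) (hPpos x).le
    calc (c * m ^ (n-1)) * r b (xb b)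
        = ∑ _x ∈ ({x : Fin n → Fin m | x i = b} : Finset _), c * r b (xb b) := by
          rw [Finset.sum_const, fiber_card_aux, nsmul_eq_mul]; push_cast; ring
      _ ≤ _ := Finset.sum_le_sum h1
  have hEi_eq : ∑ b : Fin m, ∑ x ∈ ({x : Fin n → Fin m | x i = b} : Finset _), P x * r b x = E i := by
    calc ∑ b : Fin m, ∑ x ∈ ({x : Fin n → Fin m | x i = b} : Finset _), P x * r b x
        = ∑ b : Fin m, ∑ x ∈ ({x : Fin n → Fin m | x i = b} : Finset _), P x * r (x i) x := by
          refine Finset.sum_congr rfl fun b _ => Finset.sum_congr rfl fun x hx => ?_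
          have hx' : x i = b := by simpa using (mem_filter.mp hx).2
          rw [hx']
      _ = ∑ x, P x * r (x i) x :=
          Finset.sum_fiberwise_of_maps_to (fun x _ => mem_univ (x i)) (fun x => P x * r (x i) x)
      _ = E i := by
          refine Finset.sum_congr rfl fun x _ => ?_
          rw [hrdef]
          simp only [Finset.mul_sum]
          refine Finset.sum_congr rfl fun y _ => ?_
          by_cases h : x i = y i
          · simp [h]
          · rw [if_neg (fun hh => h hh.symm), if_neg h]; ring
  -- total chosen error
  set T : ℝ := ∑ b : Fin m, r b (xb b) with hTdef
  have hT_bound : (c * m ^ (n-1)) * T ≤ E i := by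
    rw [hTdef, Finset.mul_sum, ← hEi_eq]
    exact Finset.sum_le_sum fun b _ => hfib b
  -- lower bound on the sum of sups
  have hS1 : ∑ y : Fin n → Fin m, Q (xb (y i)) y ≤ ∑ y : Fin n → Fin m, ⨆ x, Q x y := by
    refine Finset.sum_le_sum fun y _ => ?_
    exact le_ciSup (Set.finite_range fun x => Q x y).bddAbove (xb (y i))
  have hS2 : ∑ y : Fin n → Fin m, Q (xb (y i)) y = (m : ℝ) - T := by
    rw [← Finset.sum_fiberwise_of_maps_to (g := fun y : Fin n → Fin m => y i)
      (fun y _ => mem_univ (y i)) (fun y => Q (xb (y i)) y)]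
    have hfib2 : ∀ b : Fin m,
        ∑ y ∈ ({y : Fin n → Fin m | y i = b} : Finset _), Q (xb (y i)) y = 1 - r b (xb b) := by
      intro b
      have h1 : ∑ y ∈ ({y : Fin n → Fin m | y i = b} : Finset _), Q (xb (y i)) y
          = ∑ y ∈ ({y : Fin n → Fin m | y i = b} : Finset _), Q (xb b) y := by
        refine Finset.sum_congr rfl fun y hy => ?_
        have hy' : y i = b := by simpa using (mem_filter.mp hy).2
        rw [hy']
      rw [h1]
      have h2 : ∑ y ∈ ({y : Fin n → Fin m | y i = b} : Finset _), Q (xb b) y + r b (xb b)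
          = ∑ y, Q (xb b) y := by
        rw [hrdef, Finset.sum_filter]
        rw [← Finset.sum_add_distrib]
        refine Finset.sum_congr rfl fun y _ => ?_
        by_cases h : y i = b <;> simp [h]
      rw [hQ1] at h2
      linarith
    rw [Finset.sum_congr rfl fun b _ => hfib2 b]
    rw [Finset.sum_sub_distrib, Finset.sum_const, Finset.card_univ, Fintype.card_fin,
      nsmul_eq_mul, mul_one, hTdef]
  -- arithmetic conclusion
  have hpow : (m:ℝ) ^ n = m * m ^ (n - 1) := by
    conv_lhs => rw [show n = (n-1)+1 by omega]
    rw [pow_succ]; ring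
  have hθpos : 0 < θ := by
    rw [hθ]; positivity
  have hTle : T ≤ m * D / (θ * n) := by
    rw [le_div_iff₀ (by positivity)]
    have hT0 : 0 ≤ T := Finset.sum_nonneg fun b _ => hr0 b (xb b)
    have h3 : (n:ℝ) * ((c * m ^ (n-1)) * T) ≤ D := by
      calc (n:ℝ) * ((c * m ^ (n-1)) * T) ≤ (n:ℝ) * E i := by
            have := hT_bound; nlinarith
        _ ≤ D := hEiD
    rw [hθ, hpow]
    nlinarith [h3, hmR]
  have expand : (m:ℝ) * (1 - D / (θ * n)) = m - m * D / (θ * n) := by ring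
  rw [ge_iff_le, expand]
  linarith
end

section
/- Fix integers m ≥ 2, n ≥ 1, a real number α > 1, a probability distribution P with full support on 𝒳, set θ = m^n · min_{x∈𝒳} P(x), and let D be a real number with 0 < D < θn. Then every (P,D)-valid mechanism Q with Q(y|x) > 0 for all x, y ∈ 𝒳 satisfies ε_{α,DP}(Q) ≥ log( (m−1)·(n − D/θ)^{α/(α−1)} / (D/θ) ) − (1/(α−1))·log( n·m^{n−1} ). -/
open Finset Real

private lemma stepA {ι : Type*} (s : Finset ι) (f g : ι → ℝ)
    (hf : ∀ y, 0 < f y) (hg : ∀ y, 0 < g y) {α : ℝ} (hα : 1 < α) :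
    ∑ y ∈ s, f y ≤ (∑ y ∈ s, g y) ^ (1 - α⁻¹) * (∑ y ∈ s, f y ^ α * g y ^ (1 - α)) ^ α⁻¹ := by
  have h := Real.inner_le_weight_mul_Lp_of_nonneg s hα.le g (fun y => f y / g y)
    (fun i => (hg i).le) (fun i => div_nonneg (hf i).le (hg i).le)
  have e1 : ∑ y ∈ s, g y * (f y / g y) = ∑ y ∈ s, f y :=
    Finset.sum_congr rfl fun y _ => mul_div_cancel₀ _ (hg y).ne'
  have e2 : ∑ y ∈ s, g y * (f y / g y) ^ α = ∑ y ∈ s, f y ^ α * g y ^ (1 - α) := by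
    refine Finset.sum_congr rfl fun y _ => ?_
    rw [Real.div_rpow (hf y).le (hg y).le, Real.rpow_sub (hg y), Real.rpow_one]
    field_simp
  rw [e1, e2] at h
  exact h

private lemma stepB {ι : Type*} (s : Finset ι) (h : ι → ℝ) (hh : ∀ y, 0 ≤ h y)
    {c : ℝ} (hc0 : 0 < c) (hc1 : c < 1) :
    ∑ y ∈ s, h y ^ c ≤ (s.card : ℝ) ^ (1 - c) * (∑ y ∈ s, h y) ^ c := by
  have hp : (1 : ℝ) ≤ c⁻¹ := by
    rw [le_inv_comm₀ one_pos hc0]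
    simpa using hc1.le
  have key := Real.inner_le_weight_mul_Lp_of_nonneg s hp (fun _ => (1:ℝ)) (fun y => h y ^ c)
    (fun _ => zero_le_one) (fun y => Real.rpow_nonneg (hh y) c)
  simp only [one_mul, Finset.sum_const, nsmul_eq_mul, mul_one, inv_inv] at key
  have e : ∑ y ∈ s, (h y ^ c) ^ c⁻¹ = ∑ y ∈ s, h y :=
    Finset.sum_congr rfl fun y _ => Real.rpow_rpow_inv (hh y) hc0.ne'
  rw [e] at key
  exact key

private lemma hamming_update {m n : ℕ} (z : Fin n → Fin m) (i : Fin n) (u : Fin m)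
    (hu : u ≠ z i) : hammingDist (Function.update z i u) z = 1 := by
  have hflt : (Finset.univ.filter fun j => Function.update z i u j ≠ z j) = {i} := by
    ext j
    simp only [Finset.mem_filter, Finset.mem_univ, true_and, Finset.mem_singleton]
    rcases eq_or_ne j i with rfl | hj
    · simp [Function.update_self, hu]
    · simp [Function.update_of_ne hj, hj]
  simp [hammingDist, hflt]

private lemma tt_sum {m n : ℕ} (F : ((Fin n → Fin m) × Fin n × Fin m) → ℝ) :
    ∑ t ∈ Finset.univ.filter
        (fun t : ((Fin n → Fin m) × Fin n × Fin m) => t.2.2 ≠ t.1 t.2.1), F t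
      = ∑ z : Fin n → Fin m, ∑ i : Fin n, ∑ u ∈ Finset.univ.erase (z i), F (z, i, u) := by
  rw [Finset.sum_filter, Fintype.sum_prod_type]
  refine Finset.sum_congr rfl fun z _ => ?_
  rw [Fintype.sum_prod_type]
  refine Finset.sum_congr rfl fun i _ => ?_
  rw [← Finset.filter_ne', Finset.sum_filter]

set_option maxHeartbeats 2000000 in
/-- let `α > 1`, `P` a full-support distribution on `𝒳 = Fin n → Fin m`,
`θ = m^n · min_x P(x)` and `0 < D < θn`. Every `(P,D)`-valid mechanism `Q` with
strictly positive entries satisfies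
`ε_{α,DP}(Q) ≥ log((m-1)(n - D/θ)^{α/(α-1)}/(D/θ)) - (1/(α-1)) log(n m^{n-1})`,
where `ε_{α,DP}(Q)` is the maximum over neighboring `x, x'` of
`(1/(α-1)) log Σ_y Q(y|x)^α Q(y|x')^{1-α}` (so some neighboring pair attains at least
the stated bound). -/
theorem stmt_9 (m n : ℕ) (hm : 2 ≤ m) (hn : 1 ≤ n)
    (α : ℝ) (hα : 1 < α)
    (P : (Fin n → Fin m) → ℝ) (hPpos : ∀ x, 0 < P x) (hPsum : ∑ x, P x = 1)
    (θ : ℝ) (hθ : θ = (m : ℝ) ^ n * (⨅ x, P x))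
    (D : ℝ) (hD0 : 0 < D) (hDθ : D < θ * n)
    (Q : (Fin n → Fin m) → (Fin n → Fin m) → ℝ)
    (hQpos : ∀ x y, 0 < Q x y) (hQ1 : ∀ x, ∑ y, Q x y = 1)
    (hvalid : ∑ x, ∑ y, P x * Q x y * (hammingDist x y : ℝ) ≤ D) :
    ∃ x x' : Fin n → Fin m, hammingDist x x' = 1 ∧
      1 / (α - 1) * Real.log (∑ y, Q x y ^ α * Q x' y ^ (1 - α)) ≥
        Real.log (((m : ℝ) - 1) * ((n : ℝ) - D / θ) ^ (α / (α - 1)) / (D / θ)) -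
          1 / (α - 1) * Real.log ((n : ℝ) * (m : ℝ) ^ (n - 1)) := by
  classical
  haveI : NeZero m := ⟨by omega⟩
  haveI : NeZero n := ⟨by omega⟩
  have hα0 : (0:ℝ) < α := by linarith
  have hα1 : (0:ℝ) < α - 1 := by linarith
  have hm1 : (1:ℝ) ≤ (m:ℝ) - 1 := by
    have : (2:ℝ) ≤ m := by exact_mod_cast hm
    linarith
  have hm1pos : (0:ℝ) < (m:ℝ) - 1 := by linarith
  have hK : (0:ℝ) < (m:ℝ)^n := by positivity
  -- the minimum of P
  obtain ⟨x₀, hx₀⟩ : ∃ x₀, ∀ x, P x₀ ≤ P x := Finite.exists_min P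
  have hinf : (⨅ x, P x) = P x₀ :=
    le_antisymm (ciInf_le (Set.Finite.bddBelow (Set.finite_range P)) x₀) (le_ciInf hx₀)
  have hθpos : 0 < θ := by rw [hθ, hinf]; exact mul_pos hK (hPpos x₀)
  set D' := D / θ with hD'def
  have hD'0 : 0 < D' := div_pos hD0 hθpos
  have hD'n : D' < n := by
    rw [hD'def, div_lt_iff₀ hθpos]; linarith
  have hnD' : (0:ℝ) < (n:ℝ) - D' := by linarith
  -- expected distortion rows
  set ED : (Fin n → Fin m) → ℝ := fun z => ∑ y, Q z y * (hammingDist z y : ℝ) with hED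
  have hE0 : ∀ z, 0 ≤ ED z := fun z =>
    Finset.sum_nonneg fun y _ => mul_nonneg (hQpos z y).le (Nat.cast_nonneg _)
  have hEsum : ∑ z, ED z ≤ (m:ℝ)^n * D' := by
    have h1 : P x₀ * ∑ z, ED z ≤ D := by
      rw [Finset.mul_sum]
      refine le_trans (Finset.sum_le_sum fun x _ => ?_) hvalid
      calc P x₀ * ED x ≤ P x * ED x := mul_le_mul_of_nonneg_right (hx₀ x) (hE0 x)
      _ = ∑ y, P x * Q x y * (hammingDist x y : ℝ) := by
          rw [hED, Finset.mul_sum]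
          exact Finset.sum_congr rfl fun y _ => by ring
    have hPx0 : 0 < P x₀ := hPpos x₀
    have hmd : (m:ℝ)^n * D' = D / P x₀ := by
      rw [hD'def, hθ, hinf]
      field_simp
    rw [hmd, le_div_iff₀ hPx0]
    linarith [h1]
  -- coordinate sums
  have L1 : ∀ z : Fin n → Fin m,
      ∑ i : Fin n, ∑ y ∈ Finset.univ.filter (fun y => y i ≠ z i), Q z y = ED z := by
    intro z
    calc ∑ i : Fin n, ∑ y ∈ Finset.univ.filter (fun y => y i ≠ z i), Q z y
        = ∑ i : Fin n, ∑ y, if y i ≠ z i then Q z y else 0 :=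
          Finset.sum_congr rfl fun i _ => Finset.sum_filter _ _
      _ = ∑ y, ∑ i : Fin n, if y i ≠ z i then Q z y else 0 := Finset.sum_comm
      _ = ∑ y, Q z y * (hammingDist z y : ℝ) := by
          refine Finset.sum_congr rfl fun y _ => ?_
          rw [← Finset.sum_filter, Finset.sum_const, nsmul_eq_mul, mul_comm]
          congr 2
          rw [hammingDist_comm]
          rfl
  have L2 : ∀ z : Fin n → Fin m,
      ∑ i : Fin n, ∑ y ∈ Finset.univ.filter (fun y => y i = z i), Q z y = (n:ℝ) - ED z := by
    intro z
    have hsplit : ∀ i : Fin n,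
        ∑ y ∈ Finset.univ.filter (fun y => y i = z i), Q z y
          = 1 - ∑ y ∈ Finset.univ.filter (fun y => y i ≠ z i), Q z y := by
      intro i
      have := Finset.sum_filter_add_sum_filter_not Finset.univ (fun y => y i = z i) (Q z)
      rw [hQ1 z] at this
      have hne : ∑ y ∈ Finset.univ.filter (fun y => ¬ y i = z i), Q z y
          = ∑ y ∈ Finset.univ.filter (fun y => y i ≠ z i), Q z y := rfl
      linarith [this, hne.le, hne.ge]
    rw [Finset.sum_congr rfl fun i _ => hsplit i, Finset.sum_sub_distrib, Finset.sum_const,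
      Finset.card_univ, Fintype.card_fin, nsmul_eq_mul, mul_one, L1 z]
  -- the maximizing neighboring pair
  have hPrne : (Finset.univ.filter
      (fun p : (Fin n → Fin m) × (Fin n → Fin m) => hammingDist p.1 p.2 = 1)).Nonempty := by
    refine ⟨(Function.update (fun _ => (⟨0, by omega⟩ : Fin m)) (⟨0, by omega⟩ : Fin n)
      ⟨1, by omega⟩, fun _ => ⟨0, by omega⟩), ?_⟩
    rw [Finset.mem_filter]
    exact ⟨Finset.mem_univ _, hamming_update _ _ _ (by simp [Fin.ext_iff])⟩
  obtain ⟨b, hbPr, hbmax⟩ := Finset.exists_max_image _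
    (fun p : (Fin n → Fin m) × (Fin n → Fin m) => ∑ y, Q p.1 y ^ α * Q p.2 y ^ (1 - α)) hPrne
  set V : ℝ := ∑ y, Q b.1 y ^ α * Q b.2 y ^ (1 - α) with hVdef
  have hbd : hammingDist b.1 b.2 = 1 := (Finset.mem_filter.mp hbPr).2
  have hVpos : 0 < V := Finset.sum_pos (fun y _ => mul_pos
    (Real.rpow_pos_of_pos (hQpos _ y) _) (Real.rpow_pos_of_pos (hQpos _ y) _)) univ_nonempty
  have hV : ∀ (z : Fin n → Fin m) (i : Fin n) (u : Fin m), u ≠ z i →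
      ∑ y, Q (Function.update z i u) y ^ α * Q z y ^ (1 - α) ≤ V := by
    intro z i u hu
    exact hbmax (Function.update z i u, z)
      (Finset.mem_filter.mpr ⟨Finset.mem_univ _, hamming_update z i u hu⟩)
  -- triples
  set TT : Finset ((Fin n → Fin m) × Fin n × Fin m) :=
    Finset.univ.filter (fun t => t.2.2 ≠ t.1 t.2.1) with hTT
  set qf : ((Fin n → Fin m) × Fin n × Fin m) → ℝ :=
    fun t => ∑ y ∈ Finset.univ.filter (fun y => y t.2.1 = t.2.2), Q t.1 y with hqf
  set pf : ((Fin n → Fin m) × Fin n × Fin m) → ℝ :=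
    fun t => ∑ y ∈ Finset.univ.filter (fun y => y t.2.1 = t.2.2),
      Q (Function.update t.1 t.2.1 t.2.2) y with hpf
  have hq0 : ∀ t, 0 ≤ qf t := fun t =>
    Finset.sum_nonneg fun y _ => (hQpos _ y).le
  -- sum of qf over TT
  have inner_q : ∀ (z : Fin n → Fin m) (i : Fin n),
      ∑ u ∈ Finset.univ.erase (z i), ∑ y ∈ Finset.univ.filter (fun y => y i = u), Q z y
        = ∑ y ∈ Finset.univ.filter (fun y => y i ≠ z i), Q z y := by
    intro z i
    calc ∑ u ∈ Finset.univ.erase (z i), ∑ y ∈ Finset.univ.filter (fun y => y i = u), Q z y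
        = ∑ u ∈ Finset.univ.erase (z i), ∑ y, if y i = u then Q z y else 0 :=
          Finset.sum_congr rfl fun u _ => Finset.sum_filter _ _
      _ = ∑ y, ∑ u ∈ Finset.univ.erase (z i), if y i = u then Q z y else 0 := Finset.sum_comm
      _ = ∑ y, if y i ≠ z i then Q z y else 0 := by
          refine Finset.sum_congr rfl fun y _ => ?_
          rw [Finset.sum_ite_eq]
          simp
      _ = ∑ y ∈ Finset.univ.filter (fun y => y i ≠ z i), Q z y := (Finset.sum_filter _ _).symm
  have hqsum : ∑ t ∈ TT, qf t = ∑ z, ED z := by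
    rw [hTT, tt_sum qf]
    refine Finset.sum_congr rfl fun z _ => ?_
    rw [← L1 z]
    exact Finset.sum_congr rfl fun i _ => inner_q z i
  -- sum of pf over TT via the involution
  have hpsum : ∑ t ∈ TT, pf t = ((m:ℝ) - 1) * ∑ z, ((n:ℝ) - ED z) := by
    have hbij : ∑ t ∈ TT, pf t = ∑ t ∈ TT,
        (∑ y ∈ Finset.univ.filter (fun y => y t.2.1 = t.1 t.2.1), Q t.1 y) := by
      refine Finset.sum_nbij'
        (fun t => (Function.update t.1 t.2.1 t.2.2, t.2.1, t.1 t.2.1))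
        (fun t => (Function.update t.1 t.2.1 t.2.2, t.2.1, t.1 t.2.1)) ?_ ?_ ?_ ?_ ?_
      · intro t ht
        rw [hTT, Finset.mem_filter] at ht ⊢
        refine ⟨Finset.mem_univ _, ?_⟩
        simp only [Function.update_self]
        exact ht.2.symm
      · intro t ht
        rw [hTT, Finset.mem_filter] at ht ⊢
        refine ⟨Finset.mem_univ _, ?_⟩
        simp only [Function.update_self]
        exact ht.2.symm
      · intro t ht
        ext <;> simp [Function.update_idem, Function.update_eq_self, Function.update_self]
      · intro t ht
        ext <;> simp [Function.update_idem, Function.update_eq_self, Function.update_self]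
      · intro t ht
        simp only [Function.update_self, hpf]
    rw [hbij, hTT, tt_sum, Finset.mul_sum]
    refine Finset.sum_congr rfl fun z _ => ?_
    rw [← L2 z, Finset.mul_sum]
    refine Finset.sum_congr rfl fun i _ => ?_
    show ∑ _u ∈ Finset.univ.erase (z i),
        (∑ y ∈ Finset.univ.filter (fun y => y i = z i), Q z y) = _
    rw [Finset.sum_const, Finset.card_erase_of_mem (Finset.mem_univ _), Finset.card_univ,
      Fintype.card_fin, nsmul_eq_mul]
    congr 1
    rw [Nat.cast_sub (by omega : 1 ≤ m), Nat.cast_one]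
  -- cardinality of TT
  have hcard : ((TT.card : ℝ)) = (m:ℝ)^n * ((n:ℝ) * ((m:ℝ) - 1)) := by
    have : (TT.card : ℝ) = ∑ t ∈ TT, (1:ℝ) := by
      rw [Finset.sum_const, nsmul_eq_mul, mul_one]
    rw [this, hTT, tt_sum (fun _ => (1:ℝ))]
    have : ∀ z : Fin n → Fin m, ∑ i : Fin n, ∑ _u ∈ Finset.univ.erase (z i), (1:ℝ)
        = (n:ℝ) * ((m:ℝ) - 1) := by
      intro z
      rw [Finset.sum_congr rfl fun i _ => by
        rw [Finset.sum_const, Finset.card_erase_of_mem (Finset.mem_univ _), Finset.card_univ,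
          Fintype.card_fin, nsmul_eq_mul, mul_one], Finset.sum_const, Finset.card_univ,
        Fintype.card_fin, nsmul_eq_mul]
      rw [Nat.cast_sub (by omega : 1 ≤ m), Nat.cast_one]
    rw [Finset.sum_congr rfl fun z _ => this z, Finset.sum_const, Finset.card_univ,
      Fintype.card_pi, nsmul_eq_mul]
    simp [Fintype.card_fin]
  -- per-triple inequality
  have key : ∀ t ∈ TT, pf t ≤ qf t ^ (1 - α⁻¹) * V ^ α⁻¹ := by
    intro t ht
    obtain ⟨z, i, u⟩ := t
    have hu : u ≠ z i := by
      rw [hTT, Finset.mem_filter] at ht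
      exact ht.2
    show (∑ y ∈ Finset.univ.filter (fun y => y i = u), Q (Function.update z i u) y)
        ≤ (∑ y ∈ Finset.univ.filter (fun y => y i = u), Q z y) ^ (1 - α⁻¹) * V ^ α⁻¹
    have h1 := stepA (Finset.univ.filter (fun y => y i = u))
      (fun y => Q (Function.update z i u) y) (fun y => Q z y)
      (fun y => hQpos _ y) (fun y => hQpos _ y) hα
    have h2 : ∑ y ∈ Finset.univ.filter (fun y => y i = u),
        Q (Function.update z i u) y ^ α * Q z y ^ (1 - α) ≤ V := by
      refine le_trans (Finset.sum_le_sum_of_subset_of_nonneg (Finset.subset_univ _)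
        (fun y _ _ => ?_)) (hV z i u hu)
      exact mul_nonneg (Real.rpow_nonneg (hQpos _ y).le _) (Real.rpow_nonneg (hQpos _ y).le _)
    refine h1.trans ?_
    exact mul_le_mul_of_nonneg_left
      (Real.rpow_le_rpow (Finset.sum_nonneg fun y _ => mul_nonneg
        (Real.rpow_nonneg (hQpos _ y).le _) (Real.rpow_nonneg (hQpos _ y).le _)) h2
        (by positivity))
      (Real.rpow_nonneg (Finset.sum_nonneg fun y _ => (hQpos _ y).le) _)
  -- chain of inequalities
  have hc0 : (0:ℝ) < 1 - α⁻¹ := by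
    have : α⁻¹ < 1 := by rw [inv_lt_one₀ hα0]; exact hα
    linarith
  have hc1 : (1:ℝ) - α⁻¹ < 1 := by
    have : (0:ℝ) < α⁻¹ := by positivity
    linarith
  have main1 : ∑ t ∈ TT, pf t ≤ (∑ t ∈ TT, qf t ^ (1 - α⁻¹)) * V ^ α⁻¹ := by
    rw [Finset.sum_mul]
    exact Finset.sum_le_sum key
  have main2 := stepB TT qf hq0 hc0 hc1
  have main3 : (∑ t ∈ TT, qf t) ^ (1 - α⁻¹) ≤ ((m:ℝ)^n * D') ^ (1 - α⁻¹) := by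
    refine Real.rpow_le_rpow (Finset.sum_nonneg fun t _ => hq0 t) ?_ hc0.le
    rw [hqsum]; exact hEsum
  clear_value TT qf pf
  have hsumE : ∑ z : Fin n → Fin m, ((n:ℝ) - ED z) ≥ (m:ℝ)^n * ((n:ℝ) - D') := by
    rw [Finset.sum_sub_distrib, Finset.sum_const, Finset.card_univ, Fintype.card_pi]
    simp only [Fintype.card_fin, Finset.prod_const, Finset.card_univ]
    rw [nsmul_eq_mul]
    push_cast
    nlinarith [hEsum]
  have HL : ((m:ℝ) - 1) * ((m:ℝ)^n * ((n:ℝ) - D'))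
      ≤ (((m:ℝ)^n * ((n:ℝ) * ((m:ℝ) - 1))) ^ (α⁻¹) * ((m:ℝ)^n * D') ^ (1 - α⁻¹)) * V ^ α⁻¹ := by
    have e1 : ((m:ℝ) - 1) * ((m:ℝ)^n * ((n:ℝ) - D')) ≤ ∑ t ∈ TT, pf t := by
      rw [hpsum]
      have := hsumE
      nlinarith [hsumE]
    refine e1.trans (main1.trans ?_)
    have hVnn : (0:ℝ) ≤ V ^ α⁻¹ := Real.rpow_nonneg hVpos.le _
    refine mul_le_mul_of_nonneg_right ?_ hVnn
    refine main2.trans ?_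
    rw [hcard]
    have h1ma : (1:ℝ) - (1 - α⁻¹) = α⁻¹ := by ring
    rw [h1ma]
    exact mul_le_mul_of_nonneg_left main3 (Real.rpow_nonneg (by positivity) _)
  -- take logs
  set a1 := Real.log ((m:ℝ) - 1) with ha1
  set a2 := Real.log ((m:ℝ)^n) with ha2
  set a3 := Real.log ((n:ℝ) - D') with ha3
  set a4 := Real.log D' with ha4
  set a5 := Real.log (n:ℝ) with ha5
  set a6 := Real.log (m:ℝ) with ha6
  set aV := Real.log V with haV
  have hnpos : (0:ℝ) < n := by exact_mod_cast Nat.pos_of_ne_zero (by omega)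
  have hLpos : (0:ℝ) < ((m:ℝ) - 1) * ((m:ℝ)^n * ((n:ℝ) - D')) := by positivity
  have hlog := Real.log_le_log hLpos HL
  have eL : Real.log (((m:ℝ) - 1) * ((m:ℝ)^n * ((n:ℝ) - D'))) = a1 + (a2 + a3) := by
    rw [Real.log_mul (by positivity) (by positivity), Real.log_mul (by positivity) hnD'.ne']
  have eR : Real.log ((((m:ℝ)^n * ((n:ℝ) * ((m:ℝ) - 1))) ^ (α⁻¹)
        * ((m:ℝ)^n * D') ^ (1 - α⁻¹)) * V ^ α⁻¹)
      = α⁻¹ * (a2 + (a5 + a1)) + (1 - α⁻¹) * (a2 + a4) + α⁻¹ * aV := by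
    rw [Real.log_mul (by positivity) (by positivity),
      Real.log_mul (by positivity) (by positivity),
      Real.log_rpow (by positivity), Real.log_rpow (by positivity),
      Real.log_rpow hVpos,
      Real.log_mul (by positivity) (by positivity),
      Real.log_mul hnpos.ne' (by positivity),
      Real.log_mul (by positivity) hD'0.ne']
  rw [eL, eR] at hlog
  have F1 : α * a1 + α * a2 + α * a3 ≤ (a2 + a5 + a1) + (α - 1) * (a2 + a4) + aV := by
    have h' := mul_le_mul_of_nonneg_left hlog hα0.le
    have e : α * (α⁻¹ * (a2 + (a5 + a1)) + (1 - α⁻¹) * (a2 + a4) + α⁻¹ * aV)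
        = (a2 + a5 + a1) + (α - 1) * (a2 + a4) + aV := by
      field_simp
      ring
    rw [e] at h'
    linarith [h']
  have F2 : a2 = (n:ℝ) * a6 := by rw [ha2, ha6, Real.log_pow]
  have F3 : (0:ℝ) ≤ a6 := Real.log_nonneg (by exact_mod_cast (by omega : 1 ≤ m))
  -- final
  refine ⟨b.1, b.2, hbd, ?_⟩
  rw [ge_iff_le, ← hVdef]
  have eB1 : Real.log (((m:ℝ) - 1) * ((n:ℝ) - D') ^ (α / (α - 1)) / D')
      = a1 + (α / (α - 1)) * a3 - a4 := by
    rw [Real.log_div (by positivity) hD'0.ne',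
      Real.log_mul hm1pos.ne' (Real.rpow_pos_of_pos hnD' _).ne',
      Real.log_rpow hnD']
  have eNM : Real.log ((n:ℝ) * (m:ℝ)^(n - 1)) = a5 + ((n:ℝ) - 1) * a6 := by
    rw [Real.log_mul hnpos.ne' (by positivity), Real.log_pow,
      Nat.cast_sub hn, Nat.cast_one]
  rw [eB1, eNM, show (1:ℝ) / (α - 1) * aV = aV / (α - 1) from by ring,
    show (1:ℝ) / (α - 1) * (a5 + ((n:ℝ) - 1) * a6) = (a5 + ((n:ℝ) - 1) * a6) / (α - 1) from by
      ring, le_div_iff₀ hα1]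
  have hnn : (0:ℝ) ≤ ((n:ℝ) - 1) * a6 := by
    have : (1:ℝ) ≤ n := by exact_mod_cast hn
    exact mul_nonneg (by linarith) F3
  have expand : (a1 + α / (α - 1) * a3 - a4 - (a5 + ((n:ℝ) - 1) * a6) / (α - 1)) * (α - 1)
      = (α - 1) * a1 + α * a3 - (α - 1) * a4 - a5 - ((n:ℝ) - 1) * a6 := by
    field_simp
    ring
  rw [expand]
  linarith [F1, hnn, F2]
end

section
/- Fix integers m ≥ 2, n ≥ 1, a real number α > 1, a probability distribution P with full support on 𝒳, set θ = m^n · min_{x∈𝒳} P(x), and let D be a real number with 0 < D < n. Then every (P,D)-valid mechanism Q satisfies I_α(P,Q) ≥ ((α−n)/(α−1))·log m + (α/(α−1))·log( (1 − D/n) / ( (1/2)(1−θ)(n+1)m + θ ) ). -/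
open Finset Real

/-!
Averaging the expected Hamming distortion over the `n` coordinates gives a coordinate `i` at
which input and output of `Q` differ with probability at most `D / n`. For each output `y`, the
weighted Hölder inequality bounds `∑_{x_i = y_i} P x Q(y|x)` by
`P(x_i = y_i)^{1 - 1/α} (∑_x P x Q(y|x)^α)^{1/α}`, and since every `P x ≥ θ / m^n`,
`P(x_i = y_i) ≤ p := 1 - (1 - 1/m) θ`. Summing over `y` gives
`∑_y (∑_x P x Q(y|x)^α)^{1/α} ≥ (1 - D/n) / p^{1 - 1/α}`, which implies the stated bound because
`m p ≤ (1/2)(1 - θ)(n + 1) m + θ` and the latter is at least `1`.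
-/

lemma inner_le_weight_mul_Lp_of_subset {κ : Type*} {s t : Finset κ} (hst : s ⊆ t) {α p : ℝ}
    (hα : 1 ≤ α) {w f : κ → ℝ} (hw : ∀ k, 0 ≤ w k) (hf : ∀ k, 0 ≤ f k)
    (hwp : ∑ k ∈ s, w k ≤ p) :
    ∑ k ∈ s, w k * f k ≤ p ^ (1 - 1 / α) * (∑ k ∈ t, w k * f k ^ α) ^ (1 / α) := by
  have hwf : ∀ k, 0 ≤ w k * f k ^ α := fun k => mul_nonneg (hw k) (rpow_nonneg (hf k) α)
  rw [one_div]
  calc ∑ k ∈ s, w k * f k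
      ≤ (∑ k ∈ s, w k) ^ (1 - α⁻¹) * (∑ k ∈ s, w k * f k ^ α) ^ α⁻¹ :=
        inner_le_weight_mul_Lp_of_nonneg s hα w f hw hf
    _ ≤ p ^ (1 - α⁻¹) * (∑ k ∈ t, w k * f k ^ α) ^ α⁻¹ := by
        have hW0 : 0 ≤ ∑ k ∈ s, w k := sum_nonneg fun k _ => hw k
        have hS0 : 0 ≤ ∑ k ∈ s, w k * f k ^ α := sum_nonneg fun k _ => hwf k
        refine mul_le_mul (rpow_le_rpow hW0 hwp ?_) (rpow_le_rpow hS0 ?_ ?_)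
          (rpow_nonneg hS0 _) (rpow_nonneg (hW0.trans hwp) _)
        · exact sub_nonneg.mpr (inv_le_one_of_one_le₀ hα)
        · exact sum_le_sum_of_subset_of_nonneg hst fun k _ _ => hwf k
        · exact inv_nonneg.mpr (by linarith)

section Mechanism

variable {ι β : Type*} [Fintype ι] [DecidableEq ι] [Fintype β] [DecidableEq β]

lemma card_filter_apply_eq_mul_card (i : ι) (v : β) :
    #{x : ι → β | x i = v} * Fintype.card β = Fintype.card β ^ Fintype.card ι := by
  have h := Fintype.card_filter_piFinset_const_eq_of_mem (univ : Finset β) i (mem_univ v)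
  rw [Fintype.piFinset_univ, card_univ] at h
  rw [h, pow_sub_one_mul (Fintype.card_pos_iff.mpr ⟨i⟩).ne']

lemma sum_filter_apply_eq_le {P : (ι → β) → ℝ} {c : ℝ} (hc : ∀ x, c ≤ P x)
    (hP : ∑ x, P x = 1) (i : ι) (v : β) :
    ∑ x with x i = v, P x ≤
      1 - (1 - 1 / Fintype.card β) * (Fintype.card β ^ Fintype.card ι * c) := by
  have hβ : (Fintype.card β : ℝ) ≠ 0 := Nat.cast_ne_zero.mpr (Fintype.card_pos_iff.mpr ⟨v⟩).ne'
  have hcard : (#{x : ι → β | ¬x i = v} : ℝ) =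
      (1 - 1 / Fintype.card β) * Fintype.card β ^ Fintype.card ι := by
    have hsplit := card_filter_add_card_filter_not (s := univ) fun x : ι → β => x i = v
    have hmul := card_filter_apply_eq_mul_card i v
    rw [card_univ, Fintype.card_fun] at hsplit
    rw [← Nat.cast_inj (R := ℝ)] at hsplit hmul
    push_cast at hsplit hmul
    field_simp
    linear_combination Fintype.card β * hsplit - hmul
  have hlow : #{x : ι → β | ¬x i = v} • c ≤ ∑ x with ¬x i = v, P x :=
    card_nsmul_le_sum _ _ _ fun x _ => hc x
  rw [nsmul_eq_mul, hcard] at hlow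
  have htotal := sum_filter_add_sum_filter_not univ (fun x : ι → β => x i = v) P
  rw [hP] at htotal
  linarith

def coordMismatch (P : (ι → β) → ℝ) (Q : (ι → β) → (ι → β) → ℝ) (i : ι) : ℝ :=
  ∑ x, ∑ y, if x i = y i then 0 else P x * Q x y

variable {P : (ι → β) → ℝ} {Q : (ι → β) → (ι → β) → ℝ}

lemma sum_coordMismatch :
    ∑ i, coordMismatch P Q i = ∑ x, ∑ y, P x * Q x y * (hammingDist x y : ℝ) := by
  simp only [coordMismatch, hammingDist, natCast_card_filter, mul_sum, mul_ite, mul_one, mul_zero]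
  rw [sum_comm]
  refine sum_congr rfl fun x _ => ?_
  rw [sum_comm]
  refine sum_congr rfl fun y _ => sum_congr rfl fun i _ => ?_
  by_cases h : x i = y i <;> simp [h]

lemma exists_coordMismatch_le [Nonempty ι] {D : ℝ}
    (hD : ∑ x, ∑ y, P x * Q x y * (hammingDist x y : ℝ) ≤ D) :
    ∃ i, coordMismatch P Q i ≤ D / Fintype.card ι := by
  have hι : (Fintype.card ι : ℝ) ≠ 0 := Nat.cast_ne_zero.mpr Fintype.card_ne_zero
  obtain ⟨i, -, hi⟩ := exists_le_of_sum_le (univ_nonempty (α := ι))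
    (f := coordMismatch P Q) (g := fun _ => D / Fintype.card ι) <| by
      rw [sum_coordMismatch, sum_const, card_univ, nsmul_eq_mul, mul_div_cancel₀ _ hι]
      exact hD
  exact ⟨i, hi⟩

lemma sum_sum_filter_eq_one_sub_coordMismatch (hP : ∑ x, P x = 1)
    (hQ : ∀ x, ∑ y, Q x y = 1) (i : ι) :
    ∑ y, ∑ x with x i = y i, P x * Q x y = 1 - coordMismatch P Q i := by
  have hmass : ∑ x, ∑ y, P x * Q x y = 1 := by simp only [← mul_sum, hQ, mul_one, hP]
  rw [eq_sub_iff_add_eq, ← hmass, coordMismatch]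
  simp only [sum_filter]
  rw [sum_comm]
  simp only [← sum_add_distrib]
  refine sum_congr rfl fun x _ => sum_congr rfl fun y _ => ?_
  split_ifs <;> simp

lemma one_sub_div_card_le_rpow_mul_sum_rpow [Nonempty ι] {α c D : ℝ} (hα : 1 ≤ α)
    (hP0 : ∀ x, 0 ≤ P x) (hc : ∀ x, c ≤ P x) (hP : ∑ x, P x = 1)
    (hQ0 : ∀ x y, 0 ≤ Q x y) (hQ : ∀ x, ∑ y, Q x y = 1)
    (hD : ∑ x, ∑ y, P x * Q x y * (hammingDist x y : ℝ) ≤ D) :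
    1 - D / Fintype.card ι ≤
      (1 - (1 - 1 / Fintype.card β) * (Fintype.card β ^ Fintype.card ι * c)) ^ (1 - 1 / α) *
        ∑ y, (∑ x, P x * Q x y ^ α) ^ (1 / α) := by
  obtain ⟨i, hi⟩ := exists_coordMismatch_le hD
  rw [mul_sum]
  calc 1 - D / Fintype.card ι
      ≤ 1 - coordMismatch P Q i := by linarith
    _ = ∑ y, ∑ x with x i = y i, P x * Q x y :=
        (sum_sum_filter_eq_one_sub_coordMismatch hP hQ i).symm
    _ ≤ _ := sum_le_sum fun y _ => inner_le_weight_mul_Lp_of_subset (filter_subset _ _) hα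
        hP0 (fun x => hQ0 x y) (sum_filter_apply_eq_le hc hP i (y i))

end Mechanism

lemma le_log_of_le_rpow_mul {α m n p K s S : ℝ} (hα : 1 < α) (hm : 1 ≤ m) (hn : 1 ≤ n)
    (hp : 0 < p) (hpK : m * p ≤ K) (hK : 1 ≤ K) (hs : 0 < s) (hS : s ≤ p ^ (1 - 1 / α) * S) :
    (α - n) / (α - 1) * log m + α / (α - 1) * log (s / K) ≤ α / (α - 1) * log S := by
  have hpt : 0 < p ^ (1 - 1 / α) := rpow_pos_of_pos hp _
  have hS0 : 0 < S := pos_of_mul_pos_right (hs.trans_le hS) hpt.le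
  have hlogS : log s ≤ (1 - 1 / α) * log p + log S := by
    rw [← log_rpow hp, ← log_mul hpt.ne' hS0.ne']
    exact log_le_log hs hS
  have hlogp : log m + log p ≤ log K := by
    rw [← log_mul (by linarith) hp.ne']
    exact log_le_log (by positivity) hpK
  have hlogm : 0 ≤ log m := log_nonneg hm
  have hlogK : 0 ≤ log K := log_nonneg hK
  have ht : 0 ≤ 1 - 1 / α := by rw [sub_nonneg, div_le_one (by linarith)]; exact hα.le
  have key : log s - log K + (1 - n / α) * log m ≤ log S := by
    have h1 : (1 - 1 / α) * log p ≤ (1 - 1 / α) * (log K - log m) :=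
      mul_le_mul_of_nonneg_left (by linarith) ht
    have h2 : 0 ≤ 1 / α * (log K + (n - 1) * log m) :=
      mul_nonneg (by positivity) (by nlinarith)
    linear_combination hlogS + h1 + h2
  rw [log_div hs.ne' (by linarith)]
  calc (α - n) / (α - 1) * log m + α / (α - 1) * (log s - log K)
      = α / (α - 1) * (log s - log K + (1 - n / α) * log m) := by
        field_simp
        ring
    _ ≤ α / (α - 1) * log S :=
        mul_le_mul_of_nonneg_left key (div_nonneg (by linarith) (by linarith))

theorem stmt_10_general (m n : ℕ) (hm : 2 ≤ m) (hn : 1 ≤ n)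
    (α : ℝ) (hα : 1 < α)
    (P : (Fin n → Fin m) → ℝ) (hPpos : ∀ x, 0 < P x) (hPsum : ∑ x, P x = 1)
    (θ : ℝ) (hθ : θ = (m : ℝ) ^ n * (⨅ x, P x))
    (D : ℝ) (hDn : D < n)
    (Q : (Fin n → Fin m) → (Fin n → Fin m) → ℝ)
    (hQ0 : ∀ x y, 0 ≤ Q x y) (hQ1 : ∀ x, ∑ y, Q x y = 1)
    (hvalid : ∑ x, ∑ y, P x * Q x y * (hammingDist x y : ℝ) ≤ D) :
    α / (α - 1) * Real.log (∑ y : Fin n → Fin m, (∑ x, P x * Q x y ^ α) ^ (1 / α)) ≥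
      (α - n) / (α - 1) * Real.log m +
        α / (α - 1) *
          Real.log ((1 - D / n) / ((1 / 2) * (1 - θ) * ((n : ℝ) + 1) * m + θ)) := by
  have : Nonempty (Fin n) := ⟨⟨0, hn⟩⟩
  have hm1 : (1 : ℝ) ≤ m := by exact_mod_cast (by omega : 1 ≤ m)
  have hn1 : (1 : ℝ) ≤ n := by exact_mod_cast hn
  have hc : ∀ x, (⨅ x, P x) ≤ P x := ciInf_le (Finite.bddBelow_range P)
  have hθ1 : θ ≤ 1 := by
    have h := card_nsmul_le_sum univ P _ fun x _ => hc x
    simpa [hθ, hPsum] using h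
  have hbound := one_sub_div_card_le_rpow_mul_sum_rpow hα.le (fun x => (hPpos x).le) hc hPsum
    hQ0 hQ1 hvalid
  simp only [Fintype.card_fin] at hbound
  rw [← hθ] at hbound
  have hp : 0 < 1 - (1 - 1 / m) * θ := by
    have h : (1 - 1 / (m : ℝ)) * θ ≤ 1 - 1 / m :=
      mul_le_of_le_one_right (sub_nonneg.mpr (div_le_one_of_le₀ hm1 (by linarith))) hθ1
    have : 0 < 1 / (m : ℝ) := by positivity
    linarith
  have hpK : m * (1 - (1 - 1 / m) * θ) ≤ (1 / 2) * (1 - θ) * ((n : ℝ) + 1) * m + θ := by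
    have h : m * (1 - (1 - 1 / m) * θ) = (1 - θ) * m + θ := by field_simp; ring
    nlinarith [mul_nonneg (sub_nonneg.mpr hθ1) (mul_nonneg (by linarith : (0 : ℝ) ≤ m)
      (sub_nonneg.mpr hn1))]
  have hK : 1 ≤ (1 / 2) * (1 - θ) * ((n : ℝ) + 1) * m + θ := by
    nlinarith [mul_nonneg (sub_nonneg.mpr hθ1) (by nlinarith : (0 : ℝ) ≤ ((n : ℝ) + 1) * m - 2)]
  have hs : 0 < 1 - D / n := by rw [sub_pos, div_lt_one (by linarith)]; exact hDn
  exact le_log_of_le_rpow_mul hα hm1 hn1 hp hpK hK hs hbound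

/-- let `α > 1`, `P` a full-support distribution on `𝒳 = Fin n → Fin m`,
`θ = m^n · min_x P(x)` and `0 < D < n`. Every `(P,D)`-valid mechanism `Q` satisfies
`I_α(P,Q) ≥ ((α-n)/(α-1)) log m + (α/(α-1)) log((1 - D/n)/((1/2)(1-θ)(n+1)m + θ))`,
where `I_α(P,Q) = (α/(α-1)) log Σ_y (Σ_x P(x) Q(y|x)^α)^{1/α}` is the Sibson mutual
information. -/
theorem stmt_10 (m n : ℕ) (hm : 2 ≤ m) (hn : 1 ≤ n)
    (α : ℝ) (hα : 1 < α)
    (P : (Fin n → Fin m) → ℝ) (hPpos : ∀ x, 0 < P x) (hPsum : ∑ x, P x = 1)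
    (θ : ℝ) (hθ : θ = (m : ℝ) ^ n * (⨅ x, P x))
    (D : ℝ) (hD0 : 0 < D) (hDn : D < n)
    (Q : (Fin n → Fin m) → (Fin n → Fin m) → ℝ)
    (hQ0 : ∀ x y, 0 ≤ Q x y) (hQ1 : ∀ x, ∑ y, Q x y = 1)
    (hvalid : ∑ x, ∑ y, P x * Q x y * (hammingDist x y : ℝ) ≤ D) :
    α / (α - 1) * Real.log (∑ y : Fin n → Fin m, (∑ x, P x * Q x y ^ α) ^ (1 / α)) ≥
      (α - n) / (α - 1) * Real.log m +
        α / (α - 1) *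
          Real.log ((1 - D / n) / ((1 / 2) * (1 - θ) * ((n : ℝ) + 1) * m + θ)) :=
  stmt_10_general m n hm hn α hα P hPpos hPsum θ hθ D hDn Q hQ0 hQ1 hvalid
end

section
/- Let k be an integer with 1 ≤ k ≤ m and let D be a real number with D^{(k−1)} < D ≤ D^{(k)}. Then ε*_ML(P,D) = max{ 0, log( (m−k) − (D − D^{(k)})/(D^{(k)} − D^{(k−1)}) ) }, where D^{(k)} − D^{(k−1)} = P_{m−k+1}. -/
open Finset Real

/-- `D^{(k)} = P_{m-k+1} + ⋯ + P_m`: the sum of the `k` last (smallest) probabilities;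
with `0`-based indexing, the sum of `P j` over indices `j` with `m - k ≤ j`. -/
noncomputable def Dacc (m : ℕ) (P : Fin m → ℝ) (k : ℕ) : ℝ :=
  ∑ j ∈ Finset.univ.filter (fun j : Fin m => m - k ≤ (j : ℕ)), P j

/-- The maximal leakage `ε_ML(Q) = log Σ_j max_i Q(j|i)` of an `m × m` row-stochastic
matrix `Q` (`Q i j` is the probability of output `j` on input `i`). -/

lemma card_lt_aux (m b : ℕ) (h : b ≤ m) :
    (Finset.univ.filter fun j : Fin m => (j:ℕ) < b).card = b := by
  have : (Finset.univ.filter fun j : Fin m => (j:ℕ) < b)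
      = Finset.attachFin (Finset.range b) (fun a ha => lt_of_lt_of_le (Finset.mem_range.mp ha) h) := by
    ext j; simp [Finset.mem_attachFin]
  rw [this, Finset.card_attachFin, Finset.card_range]

lemma Dacc_gap (m : ℕ) (P : Fin m → ℝ) (k : ℕ) (hk1 : 1 ≤ k) (hkm : k ≤ m) (hb : m - k < m) :
    Dacc m P k = P ⟨m - k, hb⟩ + Dacc m P (k - 1) := by
  have hset : (Finset.univ.filter fun j : Fin m => m - k ≤ (j:ℕ))
      = insert (⟨m - k, hb⟩ : Fin m) (Finset.univ.filter fun j : Fin m => m - (k-1) ≤ (j:ℕ)) := by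
    ext j
    simp [Fin.ext_iff]
    omega
  rw [Dacc, hset, Finset.sum_insert (by simp; omega)]
  rfl

lemma Dacc_compl (m : ℕ) (P : Fin m → ℝ) (hsum : ∑ i, P i = 1) (k : ℕ) :
    ∑ i ∈ Finset.univ.filter (fun i : Fin m => (i:ℕ) < m - k), P i = 1 - Dacc m P k := by
  have h := Finset.sum_filter_add_sum_filter_not Finset.univ (fun j : Fin m => m - k ≤ (j:ℕ)) P
  rw [hsum] at h
  have hset : (Finset.univ.filter fun j : Fin m => ¬ (m - k ≤ (j:ℕ)))
      = Finset.univ.filter (fun i : Fin m => (i:ℕ) < m - k) := by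
    ext j; simp; omega
  rw [hset] at h
  rw [Dacc] at *
  linarith

lemma ciSup_eq_of_fin (m : ℕ) (f : Fin m → ℝ) (v : ℝ) (i0 : Fin m) (h1 : f i0 = v)
    (h2 : ∀ i, f i ≤ v) : (⨆ i, f i) = v := by
  haveI : Nonempty (Fin m) := ⟨i0⟩
  exact le_antisymm (ciSup_le h2) (h1 ▸ le_ciSup (Finite.bddAbove_range f) i0)

lemma sum_sup_ge_one (m : ℕ) (hm : 0 < m) (Q : Fin m → Fin m → ℝ)
    (h0 : ∀ i j, 0 ≤ Q i j) (h1 : ∀ i, ∑ j, Q i j = 1) :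
    1 ≤ ∑ j, ⨆ i, Q i j := by
  haveI : Nonempty (Fin m) := ⟨⟨0, hm⟩⟩
  calc (1:ℝ) = ∑ j, Q ⟨0, hm⟩ j := (h1 _).symm
    _ ≤ ∑ j, ⨆ i, Q i j :=
      Finset.sum_le_sum (fun j _ => le_ciSup (f := fun i => Q i j) (Finite.bddAbove_range _) _)

lemma knapsack (m : ℕ) (P : Fin m → ℝ) (hpos : ∀ i, 0 < P i) (hsum : ∑ i, P i = 1)
    (hmono : ∀ i j : Fin m, i ≤ j → P j ≤ P i)
    (k : ℕ) (hk1 : 1 ≤ k) (hkm : k ≤ m) (hb : m - k < m) (D : ℝ)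
    (Q : Fin m → Fin m → ℝ) (h0 : ∀ i j, 0 ≤ Q i j) (h1 : ∀ i, ∑ j, Q i j = 1)
    (hdist : (∑ i, P i * (1 - Q i i)) ≤ D) :
    ((m - k : ℕ) : ℝ) + (Dacc m P k - D) / P ⟨m - k, hb⟩ ≤ ∑ j, ⨆ i, Q i j := by
  haveI : Nonempty (Fin m) := ⟨⟨m - k, hb⟩⟩
  set b := m - k with hbdef
  set piv : Fin m := ⟨b, hb⟩ with hpiv
  set p := P piv with hpdef
  have hppos : 0 < p := hpos piv
  set s : Fin m → ℝ := fun j => ⨆ i, Q i j with hs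
  have hQle1 : ∀ i j, Q i j ≤ 1 := by
    intro i j
    calc Q i j ≤ ∑ j', Q i j' :=
          Finset.single_le_sum (fun j' _ => h0 i j') (Finset.mem_univ j)
      _ = 1 := h1 i
  have hsle1 : ∀ j, s j ≤ 1 := fun j => ciSup_le (fun i => hQle1 i j)
  have hsge : ∀ i j, Q i j ≤ s j := fun i j => le_ciSup (f := fun i' => Q i' j) (Finite.bddAbove_range _) i
  have hs0 : ∀ j, 0 ≤ s j := fun j => (h0 piv j).trans (hsge piv j)
  -- distortion to diag sum
  have h1D : 1 - D ≤ ∑ i, P i * Q i i := by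
    have e : ∑ i, P i * (1 - Q i i) = 1 - ∑ i, P i * Q i i := by
      simp only [mul_sub, mul_one]
      rw [Finset.sum_sub_distrib, hsum]
    have := hdist
    rw [e] at this
    linarith
  have step1 : ∑ i, P i * Q i i ≤ ∑ i, P i * s i :=
    Finset.sum_le_sum (fun i _ => mul_le_mul_of_nonneg_left (hsge i i) (hpos i).le)
  -- pointwise knapsack bound
  have hpt : ∀ i : Fin m, (P i - p) * s i ≤ (if (i:ℕ) < b then P i - p else 0) := by
    intro i
    by_cases hib : (i:ℕ) < b
    · have hple : p ≤ P i := hmono i piv (by simp [Fin.le_def, hpiv]; omega)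
      simp only [hib, if_pos]
      nlinarith [hsle1 i, hs0 i]
    · have hple : P i ≤ p := hmono piv i (by simp [Fin.le_def, hpiv]; omega)
      simp only [hib, if_neg, if_false]
      exact mul_nonpos_of_nonpos_of_nonneg (by linarith) (hs0 i)
  have step2 : ∑ i, (P i - p) * s i ≤ (1 - Dacc m P k) - p * b := by
    calc ∑ i, (P i - p) * s i ≤ ∑ i : Fin m, (if (i:ℕ) < b then P i - p else 0) :=
          Finset.sum_le_sum (fun i _ => hpt i)
      _ = ∑ i ∈ Finset.univ.filter (fun i : Fin m => (i:ℕ) < b), (P i - p) :=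
          (Finset.sum_filter (fun i : Fin m => (i:ℕ) < b) (fun i => P i - p)).symm
      _ = (∑ i ∈ Finset.univ.filter (fun i : Fin m => (i:ℕ) < b), P i)
            - (Finset.univ.filter (fun i : Fin m => (i:ℕ) < b)).card * p := by
          rw [Finset.sum_sub_distrib, Finset.sum_const, nsmul_eq_mul]
      _ = (1 - Dacc m P k) - p * b := by
          rw [Dacc_compl m P hsum k, card_lt_aux m b (by omega)]
          ring
  have hsplit : ∑ i, P i * s i = (∑ i, (P i - p) * s i) + p * ∑ i, s i := by
    rw [Finset.mul_sum, ← Finset.sum_add_distrib]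
    exact Finset.sum_congr rfl (fun i _ => by ring)
  have hfin : p * ((b:ℝ) + (Dacc m P k - D) / p) ≤ p * ∑ j, s j := by
    have hdiv : p * ((Dacc m P k - D) / p) = Dacc m P k - D := by
      field_simp
    have : p * ((b:ℝ) + (Dacc m P k - D) / p) = p * b + (Dacc m P k - D) := by
      rw [mul_add, hdiv]
    rw [this]
    linarith [h1D, step1, step2, hsplit ▸ step1]
  exact le_of_mul_le_mul_left hfin hppos


noncomputable def epsML (m : ℕ) (Q : Fin m → Fin m → ℝ) : ℝ :=
  Real.log (∑ j, ⨆ i, Q i j)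

/-- The privacy–distortion function `ε*_ML(P,D)`: the infimum of `ε_ML(Q)` over all
`(P,D)`-valid mechanisms `Q`. -/
noncomputable def epsStarML (m : ℕ) (P : Fin m → ℝ) (D : ℝ) : ℝ :=
  sInf {v : ℝ | ∃ Q : Fin m → Fin m → ℝ,
    (∀ i j, 0 ≤ Q i j) ∧ (∀ i, ∑ j, Q i j = 1) ∧
    (∑ i, P i * (1 - Q i i)) ≤ D ∧ v = epsML m Q}

/-- with `P_1 ≥ ⋯ ≥ P_m > 0`, if `1 ≤ k ≤ m` and
`D^{(k-1)} < D ≤ D^{(k)}`, then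
`ε*_ML(P,D) = max{0, log((m-k) - (D - D^{(k)})/(D^{(k)} - D^{(k-1)}))}`. -/
theorem stmt_16 (m : ℕ) (hm : 2 ≤ m) (P : Fin m → ℝ)
    (hpos : ∀ i, 0 < P i) (hsum : ∑ i, P i = 1)
    (hmono : ∀ i j : Fin m, i ≤ j → P j ≤ P i)
    (k : ℕ) (hk1 : 1 ≤ k) (hkm : k ≤ m)
    (D : ℝ) (hDl : Dacc m P (k - 1) < D) (hDu : D ≤ Dacc m P k) :
    epsStarML m P D =
      max 0 (Real.log (((m : ℝ) - k) -
        (D - Dacc m P k) / (Dacc m P k - Dacc m P (k - 1)))) := by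
  have hm0 : 0 < m := by omega
  haveI : Nonempty (Fin m) := ⟨⟨0, hm0⟩⟩
  have hbm : m - k < m := by omega
  set dk := Dacc m P k with hdk
  set dk1 := Dacc m P (k-1) with hdk1
  set p := P ⟨m - k, hbm⟩ with hpdef
  have hppos : 0 < p := hpos _
  have hgap : dk = p + dk1 := Dacc_gap m P k hk1 hkm hbm
  set t : ℝ := ((m - k : ℕ) : ℝ) + (dk - D) / p with htdef
  have hrhs : ((m : ℝ) - k) - (D - dk) / (dk - dk1) = t := by
    rw [htdef, Nat.cast_sub hkm]
    have hgp : dk - dk1 = p := by linarith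
    rw [hgp]; ring
  rw [hrhs]
  have ht0 : 0 ≤ t := by
    have h1 : 0 ≤ (dk - D)/p := div_nonneg (by linarith) hppos.le
    have h2 : (0:ℝ) ≤ ((m - k : ℕ) : ℝ) := Nat.cast_nonneg _
    rw [htdef]; linarith
  set z : Fin m := ⟨0, hm0⟩ with hzdef
  -- lower bound
  have hlb : ∀ v ∈ {v : ℝ | ∃ Q : Fin m → Fin m → ℝ,
      (∀ i j, 0 ≤ Q i j) ∧ (∀ i, ∑ j, Q i j = 1) ∧
      (∑ i, P i * (1 - Q i i)) ≤ D ∧ v = epsML m Q}, max 0 (Real.log t) ≤ v := by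
    rintro v ⟨Q, h0, h1, hdist, rfl⟩
    rw [epsML]
    have hge1 : 1 ≤ ∑ j, ⨆ i, Q i j := sum_sup_ge_one m hm0 Q h0 h1
    have hget : t ≤ ∑ j, ⨆ i, Q i j := knapsack m P hpos hsum hmono k hk1 hkm hbm D Q h0 h1 hdist
    apply max_le
    · exact Real.log_nonneg hge1
    · by_cases h : t ≤ 1
      · exact (Real.log_nonpos ht0 h).trans (Real.log_nonneg hge1)
      · exact Real.log_le_log (by linarith) hget
  -- membership
  have hmem : max 0 (Real.log t) ∈ {v : ℝ | ∃ Q : Fin m → Fin m → ℝ,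
      (∀ i j, 0 ≤ Q i j) ∧ (∀ i, ∑ j, Q i j = 1) ∧
      (∑ i, P i * (1 - Q i i)) ≤ D ∧ v = epsML m Q} := by
    by_cases hkmlt : k < m
    · -- case k < m : value log t is achieved
      have hb1 : 1 ≤ m - k := by omega
      have ht1 : 1 ≤ t := by
        have h1 : 0 ≤ (dk - D)/p := div_nonneg (by linarith) hppos.le
        have h3 : (1:ℝ) ≤ ((m - k : ℕ):ℝ) := by exact_mod_cast hb1
        rw [htdef]; linarith
      rw [max_eq_right (Real.log_nonneg ht1)]
      set piv : Fin m := ⟨m - k, hbm⟩ with hpivdef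
      set s0 : ℝ := (dk - D) / p with hs0def
      have hs0nn : 0 ≤ s0 := div_nonneg (by linarith) hppos.le
      have hs0lt : s0 < 1 := by
        rw [hs0def, div_lt_one hppos]; linarith
      have hps0 : p * s0 = dk - D := by
        rw [hs0def]; field_simp
      refine ⟨fun i j => if (i:ℕ) < m - k then (if j = i then 1 else 0)
        else if (i:ℕ) = m - k then (if j = i then s0 else if j = z then 1 - s0 else 0)
        else if j = z then 1 else 0, ?_, ?_, ?_, ?_⟩
      · intro i j; dsimp only; split_ifs <;> linarith
      · intro i; dsimp only
        by_cases hi1 : (i:ℕ) < m - k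
        · simp [hi1, Finset.sum_ite_eq']
        · by_cases hi2 : (i:ℕ) = m - k
          · have hiz : z ≠ i := by
              intro h; rw [← h] at hi2; simp [hzdef] at hi2; omega
            have hrw : ∀ j : Fin m, (if (i:ℕ) < m - k then (if j = i then (1:ℝ) else 0)
                else if (i:ℕ) = m - k then (if j = i then s0 else if j = z then 1 - s0 else 0)
                else if j = z then 1 else 0)
                = (if j = i then s0 else 0) + (if j = z then 1 - s0 else 0) := by
              intro j
              rw [if_neg hi1, if_pos hi2]
              by_cases hji : j = i
              · subst hji; rw [if_pos rfl, if_pos rfl, if_neg (fun h => hiz h.symm)]; ring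
              · rw [if_neg hji, if_neg hji]; ring
            rw [Finset.sum_congr rfl (fun j _ => hrw j), Finset.sum_add_distrib]
            simp [Finset.sum_ite_eq']
          · simp [hi1, hi2, Finset.sum_ite_eq']
      · -- distortion
        have key : ∀ i : Fin m,
            P i * (1 - (if (i:ℕ) < m - k then (if (i:Fin m) = i then (1:ℝ) else 0)
              else if (i:ℕ) = m - k then (if i = i then s0 else if i = z then 1 - s0 else 0)
              else if i = z then 1 else 0))
            = (if i = piv then p * (1 - s0) else 0) + (if m - k < (i:ℕ) then P i else 0) := by
          intro i
          by_cases hi1 : (i:ℕ) < m - k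
          · have h2 : i ≠ piv := by
              intro h; rw [h] at hi1; simp [hpivdef] at hi1
            have h3 : ¬ (m - k < (i:ℕ)) := by omega
            rw [if_pos hi1, if_pos rfl, if_neg h2, if_neg h3]; ring
          · by_cases hi2 : (i:ℕ) = m - k
            · have h2 : i = piv := Fin.ext (by simp [hpivdef, hi2])
              have h3 : ¬ (m - k < (i:ℕ)) := by omega
              rw [if_neg hi1, if_pos hi2, if_pos rfl, if_pos h2, if_neg h3, h2, ← hpdef]; ring
            · have h2 : i ≠ piv := by
                intro h; rw [h] at hi2; simp [hpivdef] at hi2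
              have hiz : i ≠ z := by
                intro h; rw [h] at hi1; simp [hzdef] at hi1; omega
              have h3 : m - k < (i:ℕ) := by omega
              rw [if_neg hi1, if_neg hi2, if_neg hiz, if_neg h2, if_pos h3]; ring
        rw [Finset.sum_congr rfl (fun i _ => key i), Finset.sum_add_distrib]
        have e1 : ∑ i : Fin m, (if i = piv then p * (1 - s0) else 0) = p * (1 - s0) := by
          simp [Finset.sum_ite_eq']
        have e2 : ∑ i : Fin m, (if m - k < (i:ℕ) then P i else 0) = dk1 := by
          have hfe : Finset.univ.filter (fun i : Fin m => m - k < (i:ℕ))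
              = Finset.univ.filter (fun i : Fin m => m - (k-1) ≤ (i:ℕ)) := by
            ext i; simp; omega
          rw [← Finset.sum_filter, hfe, hdk1]; rfl
        rw [e1, e2]
        linarith [hps0, hgap]
      · -- value
        rw [epsML]
        have hcol : ∀ j : Fin m, (⨆ i : Fin m, (if (i:ℕ) < m - k then (if j = i then (1:ℝ) else 0)
            else if (i:ℕ) = m - k then (if j = i then s0 else if j = z then 1 - s0 else 0)
            else if j = z then 1 else 0))
            = (if (j:ℕ) < m - k then (1:ℝ) else if j = piv then s0 else 0) := by
          intro j
          by_cases hj1 : (j:ℕ) < m - k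
          · rw [if_pos hj1]
            apply ciSup_eq_of_fin m _ 1 j
            · rw [if_pos hj1, if_pos rfl]
            · intro i; split_ifs <;> linarith
          · by_cases hj2 : (j:ℕ) = m - k
            · have hjp : j = piv := Fin.ext (by simp [hpivdef, hj2])
              have hjz : j ≠ z := by
                intro h; rw [h] at hj2; simp [hzdef] at hj2; omega
              rw [if_neg hj1, if_pos hjp]
              apply ciSup_eq_of_fin m _ s0 piv
              · have h1 : ¬ ((piv:ℕ) < m - k) := by simp [hpivdef]
                have h2 : (piv:ℕ) = m - k := by simp [hpivdef]
                rw [if_neg h1, if_pos h2, if_pos hjp]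
              · intro i
                by_cases h1 : (i:ℕ) < m - k
                · rw [if_pos h1]
                  have hji : j ≠ i := by
                    intro h; rw [h] at hj2; omega
                  rw [if_neg hji]; exact hs0nn
                · by_cases h2 : (i:ℕ) = m - k
                  · rw [if_neg h1, if_pos h2]
                    by_cases hji : j = i
                    · rw [if_pos hji]
                    · rw [if_neg hji, if_neg hjz]; exact hs0nn
                  · rw [if_neg h1, if_neg h2, if_neg hjz]; exact hs0nn
            · have hjp : j ≠ piv := by
                intro h; rw [h] at hj2; simp [hpivdef] at hj2
              have hjz : j ≠ z := by
                intro h; rw [h] at hj1; simp [hzdef] at hj1; omega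
              rw [if_neg hj1, if_neg hjp]
              apply ciSup_eq_of_fin m _ 0 z
              · have h1 : (z:ℕ) < m - k := by simp [hzdef]; omega
                rw [if_pos h1, if_neg hjz]
              · intro i
                by_cases h1 : (i:ℕ) < m - k
                · rw [if_pos h1]
                  have hji : j ≠ i := by
                    intro h; rw [h] at hj1; omega
                  rw [if_neg hji]
                · by_cases h2 : (i:ℕ) = m - k
                  · have hji : j ≠ i := by
                      intro h; rw [h] at hj2; omega
                    rw [if_neg h1, if_pos h2, if_neg hji, if_neg hjz]
                  · rw [if_neg h1, if_neg h2, if_neg hjz]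
        rw [Finset.sum_congr rfl (fun j _ => hcol j)]
        have hsplit2 : ∀ j : Fin m, (if (j:ℕ) < m - k then (1:ℝ) else if j = piv then s0 else 0)
            = (if (j:ℕ) < m - k then (1:ℝ) else 0) + (if j = piv then s0 else 0) := by
          intro j
          by_cases hj1 : (j:ℕ) < m - k
          · have hjp : j ≠ piv := by
              intro h; rw [h] at hj1; simp [hpivdef] at hj1
            rw [if_pos hj1, if_pos hj1, if_neg hjp]; ring
          · rw [if_neg hj1, if_neg hj1]; ring
        rw [Finset.sum_congr rfl (fun j _ => hsplit2 j), Finset.sum_add_distrib,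
          Finset.sum_boole, card_lt_aux m (m - k) (by omega)]
        have e3 : ∑ j : Fin m, (if j = piv then s0 else 0) = s0 := by
          simp [Finset.sum_ite_eq']
        rw [e3, htdef]
    · -- case k = m : value 0 is achieved
      have hmk0 : m - k = 0 := by omega
      have hdk_one : dk = 1 := by
        rw [hdk, Dacc]
        rw [show (Finset.univ.filter fun j : Fin m => m - k ≤ (j:ℕ)) = Finset.univ by
          ext j; simp; omega]
        exact hsum
      have hpz : p = P z := by
        rw [hpdef]; congr 1; exact Fin.ext (by simp [hzdef]; omega)
      have ht1 : t ≤ 1 := by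
        rw [htdef]
        have h0' : ((m - k:ℕ):ℝ) = 0 := by rw [hmk0]; norm_num
        have hle : (dk - D)/p ≤ 1 := by
          rw [div_le_one hppos]; linarith [hgap]
        linarith
      rw [max_eq_left (Real.log_nonpos ht0 ht1)]
      refine ⟨fun _ j => if j = z then 1 else 0, ?_, ?_, ?_, ?_⟩
      · intro i j; dsimp only; split_ifs <;> norm_num
      · intro i; simp [Finset.sum_ite_eq']
      · have key : ∀ i : Fin m, P i * (1 - (if i = z then (1:ℝ) else 0))
            = P i - (if i = z then P i else 0) := by
          intro i; split_ifs <;> ring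
        rw [Finset.sum_congr rfl (fun i _ => key i), Finset.sum_sub_distrib, hsum]
        have e4 : ∑ i : Fin m, (if i = z then P i else 0) = P z := by
          simp [Finset.sum_ite_eq']
        rw [e4]
        linarith [hgap, hdk_one, hpz, hDl]
      · rw [epsML]
        have hc : ∀ j : Fin m, (⨆ _ : Fin m, (if j = z then (1:ℝ) else 0))
            = (if j = z then (1:ℝ) else 0) := fun j => ciSup_const
        rw [Finset.sum_congr rfl (fun j _ => hc j)]
        simp [Finset.sum_ite_eq']
  unfold epsStarML
  exact le_antisymm (csInf_le ⟨_, fun v hv => hlb v hv⟩ hmem) (le_csInf ⟨_, hmem⟩ hlb)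
end

section
/- Fix a real D > 0. There exists a (P,D)-valid mechanism Q with ε_ML(Q) = 0 (i.e., Σ_{j=1}^m max_{1≤i≤m} Q(j|i) = 1) if and only if D ≥ 1 − P_1. -/
open Finset Real

/-- for `D > 0`, with `P_1 ≥ ⋯ ≥ P_m > 0`, there exists a `(P,D)`-valid
mechanism `Q` with zero maximal leakage (i.e. `Σ_j max_i Q(j|i) = 1`) if and only if
`D ≥ 1 - P_1`. -/
theorem stmt_17 (m : ℕ) (hm : 2 ≤ m) (P : Fin m → ℝ)
    (hpos : ∀ i, 0 < P i) (hsum : ∑ i, P i = 1)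
    (hmono : ∀ i j : Fin m, i ≤ j → P j ≤ P i)
    (D : ℝ) (hD : 0 < D) :
    (∃ Q : Fin m → Fin m → ℝ,
        (∀ i j, 0 ≤ Q i j) ∧ (∀ i, ∑ j, Q i j = 1) ∧
        (∑ i, P i * (1 - Q i i)) ≤ D ∧ (∑ j, ⨆ i, Q i j) = 1) ↔
      1 - P ⟨0, by omega⟩ ≤ D := by
  have hm0 : 0 < m := by omega
  set z : Fin m := ⟨0, hm0⟩ with hz
  constructor
  · rintro ⟨Q, hQ0, hQ1, hQD, hQL⟩
    have key : ∀ i j, Q i j = ⨆ i', Q i' j := by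
      intro i j
      have hle : ∀ j ∈ Finset.univ, Q i j ≤ ⨆ i', Q i' j :=
        fun j _ => le_ciSup (Set.Finite.bddAbove (Set.finite_range fun i' => Q i' j)) i
      have hsums : ∑ j, Q i j = ∑ j, ⨆ i', Q i' j := by rw [hQ1 i, hQL]
      exact (Finset.sum_eq_sum_iff_of_le hle).mp hsums j (Finset.mem_univ j)
    have hdiag : ∑ i, Q i i = 1 := by
      rw [← hQL]; exact Finset.sum_congr rfl fun i _ => key i i
    have h1 : ∑ i, P i * Q i i ≤ P z := by
      calc ∑ i, P i * Q i i ≤ ∑ i, P z * Q i i := by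
            refine Finset.sum_le_sum fun i _ => ?_
            exact mul_le_mul_of_nonneg_right (hmono z i (Fin.mk_le_mk.mpr (Nat.zero_le _)))
              (hQ0 i i)
        _ = P z := by rw [← Finset.mul_sum, hdiag, mul_one]
    have h2 : ∑ i, P i * (1 - Q i i) = 1 - ∑ i, P i * Q i i := by
      simp [mul_sub, Finset.sum_sub_distrib, hsum]
    linarith
  · intro hD'
    refine ⟨fun i j => if j = z then 1 else 0, ?_, ?_, ?_, ?_⟩
    · intro i j; simp only []; split <;> norm_num
    · intro i; simp
    · have : ∑ i, P i * (1 - if i = z then (1:ℝ) else 0)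
          = ∑ i, (P i - if i = z then P i else 0) := by
        refine Finset.sum_congr rfl fun i _ => ?_
        split <;> ring
      rw [this, Finset.sum_sub_distrib, hsum, Finset.sum_ite_eq' Finset.univ z P]
      simpa using hD'
    · have : ∀ j : Fin m, (⨆ i : Fin m, if j = z then (1:ℝ) else 0)
          = if j = z then (1:ℝ) else 0 := fun j => by
        haveI : Nonempty (Fin m) := ⟨z⟩
        exact ciSup_const
      simp only [this]
      simp
end

section
/- Fix integers m ≥ 2 and n ≥ 1, a real number α > 1, a probability distribution p on Fin m, and a mechanism Q on Fin m. Let p^{⊗n} be the product distribution on (Fin m)^n given by p^{⊗n}(x) = Π_{j=1}^n p(x_j), and let Q^{⊗n} be the n-fold product mechanism. Then the Sibson mutual information is additive under this parallel composition: I_α(p^{⊗n}, Q^{⊗n}) = n · I_α(p, Q), where I_α(P,Q) = (α/(α−1)) · log Σ_y ( Σ_x P(x) Q(y|x)^α )^{1/α}. -/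
open Finset Real

/-- the Sibson mutual information
`I_α(P,Q) = (α/(α-1)) log Σ_y (Σ_x P(x) Q(y|x)^α)^{1/α}` is additive under parallel
composition: for a distribution `p` and mechanism `Q` on `Fin m`, the product
distribution `p^{⊗n}` and product mechanism `Q^{⊗n}` on `(Fin m)^n` satisfy
`I_α(p^{⊗n}, Q^{⊗n}) = n · I_α(p, Q)`. -/
theorem stmt_19 (m n : ℕ) (hm : 2 ≤ m) (hn : 1 ≤ n)
    (α : ℝ) (hα : 1 < α)
    (p : Fin m → ℝ) (hp0 : ∀ i, 0 ≤ p i) (hp1 : ∑ i, p i = 1)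
    (Q : Fin m → Fin m → ℝ) (hQ0 : ∀ i j, 0 ≤ Q i j) (hQ1 : ∀ i, ∑ j, Q i j = 1) :
    α / (α - 1) * Real.log (∑ y : Fin n → Fin m,
        (∑ x : Fin n → Fin m,
          (∏ j, p (x j)) * (∏ j, Q (x j) (y j)) ^ α) ^ (1 / α)) =
      (n : ℝ) * (α / (α - 1) * Real.log (∑ j : Fin m,
        (∑ i, p i * Q i j ^ α) ^ (1 / α))) := by
  set S : Fin m → ℝ := fun j => ∑ i, p i * Q i j ^ α with hS
  have hS0 : ∀ j, 0 ≤ S j := fun j =>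
    Finset.sum_nonneg fun i _ => mul_nonneg (hp0 i) (Real.rpow_nonneg (hQ0 i j) α)
  have step1 : ∀ y : Fin n → Fin m,
      (∑ x : Fin n → Fin m, (∏ j, p (x j)) * (∏ j, Q (x j) (y j)) ^ α)
        = ∏ j, S (y j) := by
    intro y
    have : ∀ x : Fin n → Fin m,
        (∏ j, p (x j)) * (∏ j, Q (x j) (y j)) ^ α
          = ∏ j, p (x j) * Q (x j) (y j) ^ α := by
      intro x
      rw [← Real.finset_prod_rpow _ _ (fun j _ => hQ0 (x j) (y j)) α,
        ← Finset.prod_mul_distrib]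
    simp only [this]
    rw [show (∏ j, S (y j)) = ∏ j : Fin n, ∑ i : Fin m, p i * Q i (y j) ^ α from rfl,
      Finset.prod_univ_sum, ← Fintype.piFinset_univ]
  simp only [step1]
  have step2 : (∑ y : Fin n → Fin m, (∏ j, S (y j)) ^ (1 / α))
      = (∑ i : Fin m, S i ^ (1 / α)) ^ n := by
    have : ∀ y : Fin n → Fin m,
        (∏ j, S (y j)) ^ (1 / α) = ∏ j, S (y j) ^ (1 / α) := fun y =>
      (Real.finset_prod_rpow _ _ (fun j _ => hS0 (y j)) (1 / α)).symm
    simp only [this]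
    rw [← Fintype.piFinset_univ,
      ← Finset.prod_univ_sum (fun _ : Fin n => (univ : Finset (Fin m)))
        (fun _ i => S i ^ (1 / α)),
      Finset.prod_const, Finset.card_univ, Fintype.card_fin]
  rw [step2, Real.log_pow]
  ring
end
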